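/- arXiv:1507.01123 — 6 statements merged into one kernel-verified Lean document; each statement's English description precedes it below -/
import Mathlib

section
/- Let T be an invertible measure-preserving transformation of a standard Borel probability space (X, B, μ), let G be a compact metric group with Haar probability measure m_G, and let ψ: X → G be measurable. If the product measure μ ⊗ m_G is ergodic for T_ψ, then μ ⊗ m_G is the unique T_ψ-invariant Borel probability measure on X × G whose pushforward under the projection (x,g) ↦ x equals μ. -/
open MeasureTheory ENNReal NNReal BoundedContinuousFunction

/-- **Relative unique ergodicity of compact group extensions.**
Let `T` be an invertible measure-preserving transformation of a standard Borel probability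
space `(X, μ)`, `G` a compact metric group with Haar probability measure `ν`, and `ψ : X → G`
measurable.  If the skew product `T_ψ (x, g) = (T x, ψ x * g)` is ergodic for `μ ⊗ ν`, then
`μ ⊗ ν` is the unique `T_ψ`-invariant Borel probability measure on `X × G` projecting to `μ`
under the first coordinate. -/
theorem stmt_1 {X : Type*} [MeasurableSpace X] [StandardBorelSpace X]
    {G : Type*} [Group G] [MetricSpace G] [CompactSpace G] [IsTopologicalGroup G]
    [MeasurableSpace G] [BorelSpace G]
    (μ : Measure X) [IsProbabilityMeasure μ]
    (T : X ≃ᵐ X) (hT : MeasurePreserving T μ μ)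
    (ν : Measure G) [IsProbabilityMeasure ν] [ν.IsHaarMeasure]
    (ψ : X → G) (hψ : Measurable ψ)
    (herg : Ergodic (fun p : X × G => (T p.1, ψ p.1 * p.2)) (μ.prod ν)) :
    ∀ ρ : Measure (X × G), IsProbabilityMeasure ρ →
      Measure.map (fun p : X × G => (T p.1, ψ p.1 * p.2)) ρ = ρ →
      Measure.map Prod.fst ρ = μ → ρ = μ.prod ν := by
  intro ρ hρprob hρinv hρfst
  haveI : ν.IsOpenPosMeasure :=
    isOpenPosMeasure_of_mulLeftInvariant_of_compact Set.univ isCompact_univ (by simp)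
  set Tψ : X × G → X × G := fun p : X × G => (T p.1, ψ p.1 * p.2) with hTψdef
  set m : Measure (X × G) := μ.prod ν with hmdef
  have hTm : Measurable Tψ :=
    (T.measurable.comp measurable_fst).prodMk ((hψ.comp measurable_fst).mul measurable_snd)
  -- the skew product as a measurable equivalence
  set S : X × G ≃ᵐ X × G :=
    { toFun := Tψ
      invFun := fun q => (T.symm q.1, (ψ (T.symm q.1))⁻¹ * q.2)
      left_inv := fun p => by simp [Tψ]
      right_inv := fun q => by simp [Tψ]
      measurable_toFun := hTm
      measurable_invFun := (T.symm.measurable.comp measurable_fst).prodMk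
        (((hψ.comp (T.symm.measurable.comp measurable_fst)).inv).mul measurable_snd) } with hSdef
  have hScoe : ⇑S = Tψ := rfl
  have hminv : m.map Tψ = m := herg.toMeasurePreserving.map_eq
  -- the right translations
  have hRmeas : ∀ h : G, Measurable (fun p : X × G => (p.1, p.2 * h)) := fun h =>
    measurable_fst.prodMk (measurable_snd.mul_const h)
  set κ : G → Measure (X × G) := fun h => ρ.map (fun p : X × G => (p.1, p.2 * h)) with hκdef
  have hκmeas : Measurable κ := by
    apply Measure.measurable_of_measurable_coe
    intro A hA
    have hset : MeasurableSet {q : G × (X × G) | (q.2.1, q.2.2 * q.1) ∈ A} :=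
      ((measurable_fst.comp measurable_snd).prodMk
        ((measurable_snd.comp measurable_snd).mul measurable_fst)) hA
    simp only [hκdef, Measure.map_apply (hRmeas _) hA]
    exact measurable_measure_prodMk_left hset
  have hκuniv : ∀ h : G, κ h Set.univ = 1 := by
    intro h
    rw [hκdef]
    simp [Measure.map_apply (hRmeas h) MeasurableSet.univ]
  -- Lemma A : the ν-average of the κ h is m
  have LemA : ∀ A : Set (X × G), MeasurableSet A → ∫⁻ h, κ h A ∂ν = m A := by
    intro A hA
    have hind : ∀ (R : X × G → X × G) (p : X × G),
        A.indicator (1 : X × G → ℝ≥0∞) (R p) = (R ⁻¹' A).indicator 1 p := by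
      intro R p; by_cases hp : R p ∈ A <;> simp [hp]
    have h1 : ∀ h : G, κ h A = ∫⁻ p, A.indicator 1 (p.1, p.2 * h) ∂ρ := by
      intro h
      rw [hκdef]
      simp only [Measure.map_apply (hRmeas h) hA]
      rw [← lintegral_indicator_one ((hRmeas h) hA)]
      exact lintegral_congr fun p => (hind _ p).symm
    calc ∫⁻ h, κ h A ∂ν = ∫⁻ h, ∫⁻ p, A.indicator 1 (p.1, p.2 * h) ∂ρ ∂ν := by
          exact lintegral_congr fun h => h1 h
      _ = ∫⁻ p, ∫⁻ h, A.indicator 1 (p.1, p.2 * h) ∂ν ∂ρ := by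
          apply lintegral_lintegral_swap
          exact ((measurable_one.indicator hA).comp
            ((measurable_fst.comp measurable_snd).prodMk
              ((measurable_snd.comp measurable_snd).mul measurable_fst))).aemeasurable
      _ = ∫⁻ p : X × G, ν (Prod.mk p.1 ⁻¹' A) ∂ρ := by
          refine lintegral_congr fun p => ?_
          rw [lintegral_mul_left_eq_self (fun k => A.indicator 1 (p.1, k)) p.2]
          rw [← lintegral_indicator_one (measurable_prodMk_left hA)]
          exact lintegral_congr fun k => by
            by_cases hk : (p.1, k) ∈ A <;> simp [hk]
      _ = ∫⁻ x, ν (Prod.mk x ⁻¹' A) ∂(ρ.map Prod.fst) :=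
          (lintegral_map (measurable_measure_prodMk_left hA) measurable_fst).symm
      _ = m A := by rw [hρfst, hmdef, Measure.prod_apply hA]
  -- Step B : averages over arbitrary B
  have key : ∀ B : Set G, MeasurableSet B → (ν.restrict B).bind κ = (ν B) • m := by
    intro B hB
    set τ : Measure (X × G) := (ν.restrict B).bind κ with hτdef
    have hτapp : ∀ A : Set (X × G), MeasurableSet A → τ A = ∫⁻ h in B, κ h A ∂ν := fun A hA =>
      Measure.bind_apply hA hκmeas.aemeasurable
    have hτle : τ ≤ m := by
      refine Measure.le_intro fun A hA _ => ?_
      rw [hτapp A hA, ← LemA A hA]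
      exact setLIntegral_le_lintegral _ _
    have hτac : τ ≪ m := hτle.absolutelyContinuous
    haveI : IsFiniteMeasure τ :=
      ⟨lt_of_le_of_lt (Measure.le_iff'.1 hτle Set.univ) (measure_lt_top m Set.univ)⟩
    have hτinv : τ.map Tψ = τ := by
      ext A hA
      rw [Measure.map_apply hTm hA, hτapp _ (hTm hA), hτapp _ hA]
      refine setLIntegral_congr_fun hB (fun h _ => ?_)
      have hcomm : (fun p : X × G => (p.1, p.2 * h)) ⁻¹' (Tψ ⁻¹' A)
          = Tψ ⁻¹' ((fun p : X × G => (p.1, p.2 * h)) ⁻¹' A) := by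
        ext p; simp [Tψ, mul_assoc]
      rw [hκdef]
      simp only [Measure.map_apply (hRmeas h) (hTm hA), Measure.map_apply (hRmeas h) hA]
      rw [hcomm, ← Measure.map_apply hTm ((hRmeas h) hA), hρinv]
    have hD : (fun p => τ.rnDeriv m (Tψ p)) =ᵐ[m] τ.rnDeriv m := by
      have h2 := S.measurableEmbedding.rnDeriv_map τ m
      rw [hScoe, hτinv, hminv] at h2
      exact h2
    obtain ⟨c, hc⟩ := herg.ae_eq_const_of_ae_eq_comp₀
      (Measure.measurable_rnDeriv τ m).nullMeasurable hD
    have hτeq : τ = c • m := by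
      rw [← Measure.withDensity_rnDeriv_eq τ m hτac, withDensity_congr_ae hc]
      exact withDensity_const c
    have hτuniv : τ Set.univ = ν B := by
      rw [hτapp _ MeasurableSet.univ]
      simp_rw [hκuniv]
      simp
    have hcB : c = ν B := by
      rw [hτeq] at hτuniv
      simpa [measure_univ] using hτuniv
    rw [hτeq, hcB]
  -- per-function a.e. equality
  have main : ∀ f0 : X × G → ℝ≥0∞, Measurable f0 →
      (fun h => ∫⁻ p, f0 p ∂(κ h)) =ᵐ[ν] (fun _ => ∫⁻ p, f0 p ∂m) := by
    intro f0 hf0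
    refine ae_eq_of_forall_setLIntegral_eq_of_sigmaFinite
      ((Measure.measurable_lintegral hf0).comp hκmeas) measurable_const fun s hs hνs => ?_
    rw [← Measure.lintegral_bind hκmeas.aemeasurable hf0.aemeasurable, key s hs, lintegral_smul_measure,
      setLIntegral_const, mul_comm, smul_eq_mul]
  -- rectangles
  have rect : ∀ A : Set X, MeasurableSet A → ∀ B : Set G, MeasurableSet B →
      ρ (A ×ˢ B) = μ A * ν B := by
    intro A hA
    have hvint : ∀ v : G →ᵇ ℝ≥0,
        ∫⁻ p : X × G, A.indicator 1 p.1 * (v p.2 : ℝ≥0∞) ∂ρ = μ A * ∫⁻ g, (v g : ℝ≥0∞) ∂ν := by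
      intro v
      set f0 : X × G → ℝ≥0∞ := fun p => A.indicator 1 p.1 * (v p.2 : ℝ≥0∞) with hf0def
      have hvmeas : Measurable fun g : G => (v g : ℝ≥0∞) :=
        measurable_coe_nnreal_ennreal.comp (v.continuous.measurable)
      have hf0 : Measurable f0 := ((measurable_one.indicator hA).comp measurable_fst).mul
        (hvmeas.comp measurable_snd)
      set φ : G → ℝ≥0∞ := fun h => ∫⁻ p, f0 p ∂(κ h) with hφdef
      have hφae : φ =ᵐ[ν] fun _ => ∫⁻ p, f0 p ∂m := main f0 hf0
      have hφeq' : φ = fun h => ∫⁻ p : X × G, A.indicator 1 p.1 * (v (p.2 * h) : ℝ≥0∞) ∂ρ := by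
        funext h
        rw [hφdef, hκdef]
        exact lintegral_map hf0 (hRmeas h)
      obtain ⟨g₀, -, hg₀⟩ := isCompact_univ.exists_isMaxOn ⟨1, trivial⟩ v.continuous.continuousOn
      have hφcont : Continuous φ := by
        rw [hφeq', continuous_iff_continuousAt]
        intro h₀
        refine tendsto_lintegral_filter_of_dominated_convergence (fun _ => ((v g₀ : ℝ≥0∞)))
          (Filter.Eventually.of_forall fun h => ?_) (Filter.Eventually.of_forall fun h =>
            ae_of_all _ fun p => ?_) ?_ (ae_of_all _ fun p => ?_)
        · exact ((measurable_one.indicator hA).comp measurable_fst).mul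
            (hvmeas.comp (measurable_snd.mul_const h))
        · by_cases hp : p.1 ∈ A
          · simp only [Set.indicator_of_mem hp, Pi.one_apply, one_mul]
            exact ENNReal.coe_le_coe.2 (hg₀ (Set.mem_univ _))
          · simp [Set.indicator_of_notMem hp]
        · simp [measure_univ]
        · have hne : A.indicator (1 : X → ℝ≥0∞) p.1 ≠ ⊤ := by
            by_cases hp : p.1 ∈ A <;> simp [hp]
          refine ENNReal.Tendsto.const_mul ?_ (Or.inr hne)
          exact (ENNReal.tendsto_coe.2 ((v.continuous.tendsto _).comp
            ((continuous_mul_left p.2).tendsto h₀)))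
      have hφconst : φ = fun _ => ∫⁻ p, f0 p ∂m :=
        (Continuous.ae_eq_iff_eq ν hφcont continuous_const).1 hφae
      have hκ1 : κ (1 : G) = ρ := by
        rw [hκdef]
        simp only [mul_one]
        exact Measure.map_id
      have hm0 : ∫⁻ p, f0 p ∂m = μ A * ∫⁻ g, (v g : ℝ≥0∞) ∂ν := by
        rw [hf0def, hmdef, lintegral_prod_mul (measurable_one.indicator hA).aemeasurable
          hvmeas.aemeasurable, lintegral_indicator_one hA]
      calc ∫⁻ p : X × G, A.indicator 1 p.1 * (v p.2 : ℝ≥0∞) ∂ρ = φ 1 := by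
            simp only [hφdef]
            rw [hκ1]
        _ = ∫⁻ p, f0 p ∂m := congrFun hφconst 1
        _ = μ A * ∫⁻ g, (v g : ℝ≥0∞) ∂ν := hm0
    intro B hB
    set δ : X × G → ℝ≥0∞ := fun p => A.indicator 1 p.1 with hδdef
    have hδmeas : Measurable δ := (measurable_one.indicator hA).comp measurable_fst
    haveI : IsFiniteMeasure (ρ.withDensity δ) := by
      constructor
      rw [withDensity_apply _ MeasurableSet.univ, Measure.restrict_univ]
      refine lt_of_le_of_lt (lintegral_mono (g := fun _ => (1:ℝ≥0∞)) fun p => ?_) (by simp)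
      by_cases hp : p.1 ∈ A <;> simp [hδdef, hp]
    set κA : Measure G := (ρ.withDensity δ).map Prod.snd with hκAdef
    have hκAeq : κA = (μ A) • ν := by
      apply ext_of_forall_lintegral_eq_of_IsFiniteMeasure
      intro v
      have hcv : Measurable fun g : G => (v g : ℝ≥0∞) :=
        measurable_coe_nnreal_ennreal.comp v.continuous.measurable
      have hcv2 : Measurable fun p : X × G => (v p.2 : ℝ≥0∞) := hcv.comp measurable_snd
      rw [hκAdef, lintegral_map hcv measurable_snd,
        lintegral_withDensity_eq_lintegral_mul _ hδmeas hcv2, lintegral_smul_measure]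
      exact hvint v
    have hev : κA B = ρ (A ×ˢ B) := by
      rw [hκAdef, Measure.map_apply measurable_snd hB, withDensity_apply _ (measurable_snd hB)]
      have hrw : δ = (Prod.fst ⁻¹' A).indicator 1 := by
        funext p; by_cases hp : p.1 ∈ A <;> simp [hδdef, hp]
      rw [hrw, lintegral_indicator_one (measurable_fst hA), Measure.restrict_apply
        (measurable_fst hA), Set.prod_eq]
    rw [← hev, hκAeq]
    simp
  exact (Measure.prod_eq fun s t hs ht => (rect s hs t ht)).symm
end

section
/- Let T be an ergodic invertible measure-preserving transformation of a standard Borel probability space (X, B, μ) with discrete spectrum, G a compact metric group with Haar probability measure m_G, and ψ: X → G measurable such that T_ψ is ergodic. Then every element S̃ of the centralizer C(T_ψ) is of the form S̃(x,g) = (Sx, f(x)·v(g)) (mod μ⊗m_G-null sets) for some S ∈ C(T), some measurable f: X → G, and some continuous group automorphism v of G. Moreover, if S̃ and S̄ are two elements of C(T_ψ) that project to the same S ∈ C(T) on the first coordinate, then S̃ = S̄ ∘ τ_{g₀} (mod null sets) for some g₀ ∈ G, where τ_g(x,g') = (x, g'·g). -/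
open MeasureTheory

/-- A map is invertible modulo null sets. -/
def QuasiInvertible {α : Type*} [MeasurableSpace α] (S : α → α) (m : Measure α) : Prop :=
  ∃ W : α → α, MeasurePreserving W m m ∧ (W ∘ S =ᵐ[m] id) ∧ (S ∘ W =ᵐ[m] id)

/-- `T` has discrete spectrum: the linear span of the eigenfunctions of the Koopman operator
`f ↦ f ∘ T` is dense in `L²(X, μ)`. -/
def HasDiscreteSpectrum {X : Type*} [MeasurableSpace X] (T : X → X) (μ : Measure X) : Prop :=
  ∀ g : X → ℂ, MemLp g 2 μ → ∀ ε : ℝ, 0 < ε →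
    ∃ h ∈ Submodule.span ℂ
      {f : X → ℂ | MemLp f 2 μ ∧ ∃ c : ℂ, f ∘ T =ᵐ[μ] fun x => c * f x},
      eLpNorm (g - h) 2 μ < ENNReal.ofReal ε

set_option linter.unusedSectionVars false

namespace Stmt2Aux

open Filter Set Function
open scoped ENNReal NNReal Topology Pointwise

theorem ae_pull {α β : Type*} [MeasurableSpace α] [MeasurableSpace β] {m : Measure α}
    {m' : Measure β} {k : α → β} (hk : AEMeasurable k m) (hmap : Measure.map k m = m')
    {Q : β → Prop} (h : ∀ᵐ y ∂m', Q y) : ∀ᵐ a ∂m, Q (k a) :=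
  ae_of_ae_map hk (hmap ▸ h)

variable {X : Type*} [MeasurableSpace X] [StandardBorelSpace X]
    {G : Type*} [Group G] [MetricSpace G] [CompactSpace G] [IsTopologicalGroup G]
    [MeasurableSpace G] [BorelSpace G]
    {μ : Measure X} [IsProbabilityMeasure μ]
    {ν : Measure G} [IsProbabilityMeasure ν] [ν.IsHaarMeasure]
    {T : X ≃ᵐ X} {ψ : X → G}

theorem map_fst_eq : Measure.map Prod.fst (μ.prod ν) = μ := by
  simp [Measure.map_fst_prod]

theorem ae_of_comp_fst {Y : Type*} {h₁ h₂ : X → Y}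
    (h : ∀ᵐ p : X × G ∂μ.prod ν, h₁ p.1 = h₂ p.1) : ∀ᵐ x ∂μ, h₁ x = h₂ x := by
  have h0 : (μ.prod ν) {p : X × G | ¬ h₁ p.1 = h₂ p.1} = 0 := by
    simpa [ae_iff] using h
  have hset : {p : X × G | ¬ h₁ p.1 = h₂ p.1} = {x | ¬ h₁ x = h₂ x} ×ˢ (univ : Set G) := by
    ext p; simp [Set.mem_prod]
  rw [hset, Measure.prod_prod, measure_univ, mul_one] at h0
  exact ae_iff.mpr h0

theorem nu_right_inv : ν.IsMulRightInvariant := by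
  constructor
  intro k
  have hmble : Measurable (· * k : G → G) := measurable_mul_const k
  haveI : IsProbabilityMeasure (Measure.map (· * k) ν) :=
    Measure.isProbabilityMeasure_map hmble.aemeasurable
  haveI : (Measure.map (· * k) ν).IsOpenPosMeasure := by
    constructor
    intro U hU hUne
    rw [Measure.map_apply hmble hU.measurableSet]
    have hop : IsOpen ((· * k : G → G) ⁻¹' U) := hU.preimage (continuous_mul_right k)
    obtain ⟨x, hx⟩ := hUne
    have : x * k⁻¹ ∈ (· * k : G → G) ⁻¹' U := by simp [hx]
    exact hop.measure_ne_zero ν ⟨_, this⟩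
  haveI : (Measure.map (· * k) ν).IsHaarMeasure :=
    { toIsFiniteMeasureOnCompacts := inferInstance
      toIsMulLeftInvariant := inferInstance
      toIsOpenPosMeasure := inferInstance }
  exact Measure.isHaarMeasure_eq_of_isProbabilityMeasure (Measure.map (· * k) ν) ν

theorem trans_unique {a b : G} (h : ∀ᵐ p : X × G ∂μ.prod ν, p.2 * a = p.2 * b) : a = b := by
  haveI : NeBot (ae (μ.prod ν)) := ae_neBot.mpr (IsProbabilityMeasure.ne_zero _)
  obtain ⟨p, hp⟩ := h.exists
  exact mul_left_cancel hp

theorem Tψ_measurable (hψ : Measurable ψ) :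
    Measurable (fun p : X × G => (T p.1, ψ p.1 * p.2)) :=
  (T.measurable.comp measurable_fst).prodMk ((hψ.comp measurable_fst).mul measurable_snd)

/-- Core rigidity: a measure-preserving map commuting a.e. with the skew product and which is
a.e. the identity on the first coordinate is a.e. a right fiber translation. -/
theorem P2core (hψ : Measurable ψ)
    (hTψ : Ergodic (fun p : X × G => (T p.1, ψ p.1 * p.2)) (μ.prod ν))
    {R : X × G → X × G} (hR : MeasurePreserving R (μ.prod ν) (μ.prod ν))
    (hRc : R ∘ (fun p : X × G => (T p.1, ψ p.1 * p.2)) =ᵐ[μ.prod ν]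
      (fun p : X × G => (T p.1, ψ p.1 * p.2)) ∘ R)
    (hfst : ∀ᵐ p : X × G ∂μ.prod ν, (R p).1 = p.1) :
    ∃ g₀ : G, ∀ᵐ p : X × G ∂μ.prod ν, R p = (p.1, p.2 * g₀) := by
  haveI : Nonempty G := ⟨1⟩
  set P := μ.prod ν with hP
  set Tψ : X × G → X × G := fun p => (T p.1, ψ p.1 * p.2) with hTψdef
  have hTψm : Measurable Tψ := Tψ_measurable hψ
  set Φ : X × G → G := fun p => p.2⁻¹ * (R p).2 with hΦ
  have hΦm : Measurable Φ := measurable_snd.inv.mul (measurable_snd.comp hR.measurable)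
  have hinv : Φ ∘ Tψ =ᵐ[P] Φ := by
    filter_upwards [hRc, hfst] with p hc hf
    have h2 : R (Tψ p) = Tψ (R p) := hc
    show Φ (Tψ p) = Φ p
    rw [hΦ]
    simp only [h2]
    simp only [hTψdef, hf]
    group
  obtain ⟨c, hc⟩ := hTψ.ae_eq_const_of_ae_eq_comp_ae hΦm.aestronglyMeasurable hinv
  refine ⟨c, ?_⟩
  filter_upwards [hfst, hc] with p h1 h2
  have h3 : p.2⁻¹ * (R p).2 = c := h2
  have h4 : (R p).2 = p.2 * c := by rw [← h3]; group
  rw [← h1, ← h4]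

/-- Part 2 of the theorem, as a standalone lemma. -/
theorem part2core (hψ : Measurable ψ)
    (hTψ : Ergodic (fun p : X × G => (T p.1, ψ p.1 * p.2)) (μ.prod ν))
    {Stilde Sbar : X × G → X × G}
    (hSt : MeasurePreserving Stilde (μ.prod ν) (μ.prod ν))
    (hStc : Stilde ∘ (fun p : X × G => (T p.1, ψ p.1 * p.2)) =ᵐ[μ.prod ν]
      (fun p : X × G => (T p.1, ψ p.1 * p.2)) ∘ Stilde)
    (hSb : MeasurePreserving Sbar (μ.prod ν) (μ.prod ν))
    (hSbqi : QuasiInvertible Sbar (μ.prod ν))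
    (hSbc : Sbar ∘ (fun p : X × G => (T p.1, ψ p.1 * p.2)) =ᵐ[μ.prod ν]
      (fun p : X × G => (T p.1, ψ p.1 * p.2)) ∘ Sbar)
    {S : X → X} (hS : MeasurePreserving S μ μ) (hSqi : QuasiInvertible S μ)
    (hStp : ∀ᵐ p : X × G ∂μ.prod ν, (Stilde p).1 = S p.1)
    (hSbp : ∀ᵐ p : X × G ∂μ.prod ν, (Sbar p).1 = S p.1) :
    ∃ g₀ : G, Stilde =ᵐ[μ.prod ν] fun p : X × G => Sbar (p.1, p.2 * g₀) := by
  obtain ⟨Wb, hWb, hWbSb, hSbWb⟩ := hSbqi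
  obtain ⟨WS, hWS, hWSS, hSWS⟩ := hSqi
  set P := μ.prod ν with hP
  set Tψ : X × G → X × G := fun p => (T p.1, ψ p.1 * p.2) with hTψdef
  have hTψm : Measurable Tψ := Tψ_measurable hψ
  have hTψmp : MeasurePreserving Tψ P P := hTψ.toMeasurePreserving
  -- Wb commutes a.e. with Tψ
  have hWbc : ∀ᵐ p ∂P, Wb (Tψ p) = Tψ (Wb p) := by
    have h1 : ∀ᵐ p ∂P, Sbar (Wb p) = p := hSbWb
    have h2 : ∀ᵐ p ∂P, Wb (Sbar (Tψ (Wb p))) = Tψ (Wb p) := by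
      have := ae_pull (hTψm.comp hWb.measurable).aemeasurable
        (hTψmp.comp hWb).map_eq (hWbSb : ∀ᵐ q ∂P, Wb (Sbar q) = q)
      exact this
    have h3 : ∀ᵐ p ∂P, Sbar (Tψ (Wb p)) = Tψ (Sbar (Wb p)) := by
      exact ae_pull hWb.measurable.aemeasurable hWb.map_eq
        (hSbc : ∀ᵐ q ∂P, Sbar (Tψ q) = Tψ (Sbar q))
    filter_upwards [h1, h2, h3] with p e1 e2 e3
    conv_lhs => rw [← e1]
    rw [← e3, e2]
  set R : X × G → X × G := fun p => Wb (Stilde p) with hR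
  have hRm : Measurable R := hWb.measurable.comp hSt.measurable
  have hRmp : MeasurePreserving R P P := hWb.comp hSt
  have hRc : R ∘ Tψ =ᵐ[P] Tψ ∘ R := by
    have ha : ∀ᵐ p ∂P, Stilde (Tψ p) = Tψ (Stilde p) := hStc
    have hb : ∀ᵐ p ∂P, Wb (Tψ (Stilde p)) = Tψ (Wb (Stilde p)) :=
      ae_pull hSt.measurable.aemeasurable hSt.map_eq hWbc
    filter_upwards [ha, hb] with p e1 e2
    show Wb (Stilde (Tψ p)) = Tψ (Wb (Stilde p))
    rw [e1, e2]
  have hmapRfst : Measure.map (fun p : X × G => (R p).1) P = μ := by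
    have : (fun p : X × G => (R p).1) = Prod.fst ∘ R := rfl
    rw [this, ← Measure.map_map measurable_fst hRm, hRmp.map_eq, map_fst_eq]
  have hRfst : ∀ᵐ p ∂P, (R p).1 = p.1 := by
    have h1 : ∀ᵐ p ∂P, Sbar (Wb (Stilde p)) = Stilde p :=
      ae_pull hSt.measurable.aemeasurable hSt.map_eq (hSbWb : ∀ᵐ q ∂P, Sbar (Wb q) = q)
    have h2 : ∀ᵐ p ∂P, (Sbar (R p)).1 = S (R p).1 :=
      ae_pull hRm.aemeasurable hRmp.map_eq hSbp
    have h4 : ∀ᵐ p ∂P, WS (S (R p).1) = (R p).1 :=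
      ae_pull ((measurable_fst.comp hRm)).aemeasurable hmapRfst
        (hWSS : ∀ᵐ x ∂μ, WS (S x) = x)
    have h5 : ∀ᵐ p ∂P, WS (S p.1) = p.1 :=
      ae_pull measurable_fst.aemeasurable map_fst_eq (hWSS : ∀ᵐ x ∂μ, WS (S x) = x)
    filter_upwards [hStp, h1, h2, h4, h5] with p e3 e1 e2 e4 e5
    have key : S (R p).1 = S p.1 := by
      rw [← e2, hR]
      show (Sbar (Wb (Stilde p))).1 = S p.1
      rw [e1, e3]
    calc (R p).1 = WS (S (R p).1) := e4.symm
    _ = WS (S p.1) := by rw [key]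
    _ = p.1 := e5
  obtain ⟨g₀, hg⟩ := P2core hψ hTψ hRmp hRc hRfst
  refine ⟨g₀, ?_⟩
  have h1 : ∀ᵐ p ∂P, Sbar (Wb (Stilde p)) = Stilde p :=
    ae_pull hSt.measurable.aemeasurable hSt.map_eq (hSbWb : ∀ᵐ q ∂P, Sbar (Wb q) = q)
  filter_upwards [h1, hg] with p e1 e2
  show Stilde p = Sbar (p.1, p.2 * g₀)
  rw [← e2]
  exact e1.symm

theorem eigen_transfer (hT : Ergodic (⇑T) μ)
    (hTψ : Ergodic (fun p : X × G => (T p.1, ψ p.1 * p.2)) (μ.prod ν))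
    {F : X × G → X} (hF : Measurable F) (hFmap : Measure.map F (μ.prod ν) = μ)
    (hFT : ∀ᵐ p : X × G ∂(μ.prod ν), F (T p.1, ψ p.1 * p.2) = T (F p))
    {f : X → ℂ} (hf2 : MemLp f 2 μ) {c : ℂ} (hfc : f ∘ ⇑T =ᵐ[μ] fun x => c * f x) :
    ∃ lam : ℂ, ∀ᵐ p : X × G ∂(μ.prod ν), f (F p) = lam * f p.1 := by
  set P := μ.prod ν with hP
  by_cases hz : f =ᵐ[μ] 0
  · refine ⟨0, ?_⟩
    have h1 : ∀ᵐ p ∂P, f (F p) = 0 := ae_pull hF.aemeasurable hFmap hz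
    filter_upwards [h1] with p e1
    rw [e1, zero_mul]
  · have hfm : AEMeasurable f μ := hf2.aestronglyMeasurable.aemeasurable
    set a := ∫⁻ x, (‖f x‖₊ : ℝ≥0∞) ∂μ with ha
    have ha0 : a ≠ 0 := by
      intro h0
      apply hz
      have := (lintegral_eq_zero_iff' hfm.enorm).1 h0
      filter_upwards [this] with x hx
      simpa using hx
    have hatop : a ≠ ⊤ := by
      have h1 : MemLp f 1 μ := hf2.mono_exponent (by norm_num)
      exact (memLp_one_iff_integrable.1 h1).2.ne
    have hTmap : Measure.map (⇑T) μ = μ := hT.toMeasurePreserving.map_eq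
    have key : (‖c‖₊ : ℝ≥0∞) * a = 1 * a := by
      have hennm : AEMeasurable (fun x => (‖f x‖₊ : ℝ≥0∞)) μ := hf2.aestronglyMeasurable.aemeasurable.enorm
      have h1 : ∫⁻ x, (‖f (T x)‖₊ : ℝ≥0∞) ∂μ = a := by
        have hAEm : AEMeasurable (fun x => (‖f x‖₊ : ℝ≥0∞)) (Measure.map (⇑T) μ) := by
          rw [hTmap]; exact hennm
        calc ∫⁻ x, (‖f (T x)‖₊ : ℝ≥0∞) ∂μ
            = ∫⁻ y, (‖f y‖₊ : ℝ≥0∞) ∂(Measure.map (⇑T) μ) :=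
              (lintegral_map' hAEm T.measurable.aemeasurable).symm
          _ = a := by rw [hTmap]
      have h2 : ∫⁻ x, (‖f (T x)‖₊ : ℝ≥0∞) ∂μ = (‖c‖₊ : ℝ≥0∞) * a := by
        have heq : ∀ᵐ x ∂μ, (‖f (T x)‖₊ : ℝ≥0∞) = (‖c‖₊ : ℝ≥0∞) * (‖f x‖₊ : ℝ≥0∞) := by
          filter_upwards [hfc] with x hx
          have : f (T x) = c * f x := hx
          rw [this, nnnorm_mul, ENNReal.coe_mul]
        rw [lintegral_congr_ae heq, lintegral_const_mul'' _ hennm]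
      rw [one_mul]
      exact h2.symm.trans h1
    have hc1 : (‖c‖₊ : ℝ≥0∞) = 1 := (ENNReal.mul_left_inj ha0 hatop).1 key
    have hcnorm : ‖c‖ = 1 := by
      have h4 : ‖c‖₊ = 1 := by exact_mod_cast hc1
      rw [← coe_nnnorm, h4]
      simp
    have hnormT : (fun x => ‖f x‖) ∘ ⇑T =ᵐ[μ] fun x => ‖f x‖ := by
      filter_upwards [hfc] with x hx
      show ‖f (T x)‖ = ‖f x‖
      rw [show f (T x) = c * f x from hx, norm_mul, hcnorm, one_mul]
    obtain ⟨r, hr⟩ := hT.ae_eq_const_of_ae_eq_comp_ae hf2.aestronglyMeasurable.norm hnormT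
    have hrpos : r ≠ 0 := by
      intro h0
      apply hz
      filter_upwards [hr] with x hx
      rw [h0] at hx
      exact norm_eq_zero.1 hx
    have humeas : AEMeasurable (fun p : X × G => f (F p)) P := by
      have h1 : AEMeasurable f (Measure.map F P) := hFmap ▸ hfm
      exact h1.comp_aemeasurable hF.aemeasurable
    have hwmeas : AEMeasurable (fun p : X × G => f p.1) P := by
      have h1 : AEMeasurable f (Measure.map Prod.fst P) := by
        rw [show Measure.map (Prod.fst : X × G → X) P = μ from map_fst_eq]
        exact hfm
      exact h1.comp_aemeasurable measurable_fst.aemeasurable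
    have hfcF : ∀ᵐ p ∂P, (f ∘ ⇑T) (F p) = c * f (F p) := ae_pull hF.aemeasurable hFmap hfc
    have hu : ∀ᵐ p ∂P, f (F (T p.1, ψ p.1 * p.2)) = c * f (F p) := by
      filter_upwards [hFT, hfcF] with p e1 e2
      rw [e1]
      exact e2
    have hw : ∀ᵐ p ∂P, (f ∘ ⇑T) p.1 = c * f p.1 :=
      ae_pull measurable_fst.aemeasurable map_fst_eq hfc
    set q : X × G → ℂ := fun p => f (F p) * (starRingEnd ℂ) (f p.1) with hq
    have hqm : AEStronglyMeasurable q P := by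
      have hconj : AEMeasurable (fun p : X × G => (starRingEnd ℂ) (f p.1)) P :=
        Complex.continuous_conj.measurable.comp_aemeasurable hwmeas
      exact (humeas.mul hconj).aestronglyMeasurable
    have habs : ‖c‖ = 1 := hcnorm
    have hcc : (starRingEnd ℂ) c * c = 1 := by
      rw [mul_comm, Complex.mul_conj, Complex.normSq_eq_norm_sq, habs]
      norm_num
    have hqinv : q ∘ (fun p : X × G => (T p.1, ψ p.1 * p.2)) =ᵐ[P] q := by
      filter_upwards [hu, hw] with p e1 e2
      show f (F (T p.1, ψ p.1 * p.2)) * (starRingEnd ℂ) (f (T p.1)) =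
        f (F p) * (starRingEnd ℂ) (f p.1)
      have e2' : f (T p.1) = c * f p.1 := e2
      rw [e1, e2', map_mul]
      calc c * f (F p) * ((starRingEnd ℂ) c * (starRingEnd ℂ) (f p.1))
          = ((starRingEnd ℂ) c * c) * (f (F p) * (starRingEnd ℂ) (f p.1)) := by ring
        _ = f (F p) * (starRingEnd ℂ) (f p.1) := by rw [hcc, one_mul]
    obtain ⟨κ, hκ⟩ := hTψ.ae_eq_const_of_ae_eq_comp_ae hqm hqinv
    refine ⟨κ / ((r : ℂ) ^ 2), ?_⟩
    have hwr : ∀ᵐ p : X × G ∂P, ‖f p.1‖ = r :=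
      ae_pull measurable_fst.aemeasurable map_fst_eq hr
    filter_upwards [hκ, hwr] with p e1 e2
    have e1' : f (F p) * (starRingEnd ℂ) (f p.1) = κ := e1
    have h2 : (starRingEnd ℂ) (f p.1) * f p.1 = (r : ℂ) ^ 2 := by
      rw [mul_comm, Complex.mul_conj, Complex.normSq_eq_norm_sq, e2]
      norm_cast
    have h3 : f (F p) * ((r : ℂ) ^ 2) = κ * f p.1 := by
      rw [← h2, ← mul_assoc, e1']
    have hrC : (r : ℂ) ≠ 0 := Complex.ofReal_ne_zero.mpr hrpos
    field_simp
    linear_combination h3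

theorem stepA (hT : Ergodic (⇑T) μ) (hds : HasDiscreteSpectrum (⇑T) μ) (hψ : Measurable ψ)
    (hTψ : Ergodic (fun p : X × G => (T p.1, ψ p.1 * p.2)) (μ.prod ν))
    {Stilde : X × G → X × G} (hSt : MeasurePreserving Stilde (μ.prod ν) (μ.prod ν))
    (hStc : Stilde ∘ (fun p : X × G => (T p.1, ψ p.1 * p.2)) =ᵐ[μ.prod ν]
      (fun p : X × G => (T p.1, ψ p.1 * p.2)) ∘ Stilde) :
    ∃ S : X → X, MeasurePreserving S μ μ ∧
      (∀ᵐ p : X × G ∂μ.prod ν, (Stilde p).1 = S p.1) ∧ (∀ᵐ x ∂μ, S (T x) = T (S x)) := by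
  haveI : Nonempty X := by
    by_contra h0
    rw [not_nonempty_iff] at h0
    have h1 := measure_univ (μ := μ)
    rw [Set.univ_eq_empty_iff.mpr h0, measure_empty] at h1
    exact zero_ne_one h1
  classical
  set P := μ.prod ν with hP
  have hTψm : Measurable (fun p : X × G => (T p.1, ψ p.1 * p.2)) := Tψ_measurable hψ
  set F : X × G → X := fun p => (Stilde p).1 with hFdef
  have hF : Measurable F := measurable_fst.comp hSt.measurable
  have hFmap : Measure.map F P = μ := by
    rw [show F = Prod.fst ∘ Stilde from rfl, ← Measure.map_map measurable_fst hSt.measurable,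
      hSt.map_eq, map_fst_eq]
  have hFT : ∀ᵐ p : X × G ∂P, F (T p.1, ψ p.1 * p.2) = T (F p) := by
    filter_upwards [hStc] with p hp
    show (Stilde (T p.1, ψ p.1 * p.2)).1 = T (Stilde p).1
    rw [show Stilde (T p.1, ψ p.1 * p.2) = (T (Stilde p).1, ψ (Stilde p).1 * (Stilde p).2) from hp]
  set Eig : Set (X → ℂ) := {f | MemLp f 2 μ ∧ ∃ c : ℂ, f ∘ ⇑T =ᵐ[μ] fun x => c * f x} with hEig
  have hEigSel : ∀ f : X → ℂ, ∃ lam : ℂ, f ∈ Eig → ∀ᵐ p : X × G ∂P, f (F p) = lam * f p.1 := by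
    intro f
    by_cases hf : f ∈ Eig
    · obtain ⟨hf2, c, hfc⟩ := hf
      obtain ⟨l, hl⟩ := eigen_transfer hT hTψ hF hFmap hFT hf2 hfc
      exact ⟨l, fun _ => hl⟩
    · exact ⟨0, fun h0 => absurd h0 hf⟩
  choose lam hlam using hEigSel
  obtain ⟨ι, hι⟩ := exists_measurableEmbedding_real X
  set g0 : X → ℂ := fun x => ((Real.arctan (ι x) : ℝ) : ℂ) with hg0def
  have hg0m : Measurable g0 :=
    Complex.measurable_ofReal.comp (Real.continuous_arctan.measurable.comp hι.measurable)
  have hg0 : MemLp g0 2 μ := by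
    refine MemLp.mono_exponent (q := ⊤) ?_ le_top
    refine memLp_top_of_bound hg0m.aestronglyMeasurable (Real.pi / 2) ?_
    refine Eventually.of_forall fun x => ?_
    show ‖((Real.arctan (ι x) : ℝ) : ℂ)‖ ≤ Real.pi / 2
    rw [Complex.norm_real, Real.norm_eq_abs]
    exact le_of_lt (abs_lt.mpr ⟨Real.neg_pi_div_two_lt_arctan _, Real.arctan_lt_pi_div_two _⟩)
  have happrox : ∀ m : ℕ, ∃ h : X → ℂ, h ∈ Submodule.span ℂ Eig ∧
      eLpNorm (g0 - h) 2 μ < ENNReal.ofReal (1 / (m + 1)) := by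
    intro m
    obtain ⟨h, hmem, hlt⟩ := hds g0 hg0 (1 / (m + 1)) (by positivity)
    exact ⟨h, hmem, hlt⟩
  choose h hhmem hhlt using happrox
  have hspan_aesm : ∀ g ∈ Submodule.span ℂ Eig, AEStronglyMeasurable g μ := by
    intro g hg
    induction hg using Submodule.span_induction with
    | mem f hf => exact hf.1.aestronglyMeasurable
    | zero => exact aestronglyMeasurable_const
    | add f g _ _ hf hg => exact hf.add hg
    | smul a f _ hf => exact hf.const_smul a
  have htendsto : Tendsto (fun m => eLpNorm (h m - g0) 2 μ) atTop (𝓝 0) := by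
    have hb : Tendsto (fun m : ℕ => ENNReal.ofReal (1 / (m + 1))) atTop (𝓝 0) := by
      rw [show (0 : ℝ≥0∞) = ENNReal.ofReal 0 by simp]
      exact ENNReal.tendsto_ofReal tendsto_one_div_add_atTop_nhds_zero_nat
    refine tendsto_of_tendsto_of_tendsto_of_le_of_le tendsto_const_nhds hb
      (fun m => zero_le) fun m => ?_
    rw [eLpNorm_sub_comm]
    exact le_of_lt (hhlt m)
  have hTIM : TendstoInMeasure μ h atTop g0 :=
    tendstoInMeasure_of_tendsto_eLpNorm (by norm_num : (2 : ℝ≥0∞) ≠ 0)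
      (fun m => hspan_aesm _ (hhmem m)) hg0m.aestronglyMeasurable htendsto
  obtain ⟨ns, hns, haeconv⟩ := hTIM.exists_seq_tendsto_ae
  have hdecomp : ∀ m : ℕ, ∃ cm : (X → ℂ) →₀ ℂ, ↑cm.support ⊆ Eig ∧
      (cm.sum fun f r => r • f) = h m := fun m => Submodule.mem_span_set.1 (hhmem m)
  choose cm hcmsupp hcmsum using hdecomp
  set h' : ℕ → X → ℂ := fun m x => ∑ f ∈ (cm m).support, (cm m) f * lam f * f x with hh'def
  have hh'aem : ∀ m, AEMeasurable (h' m) μ := by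
    intro m
    refine Finset.aemeasurable_fun_sum _ fun f hf => ?_
    have hfE : f ∈ Eig := hcmsupp m hf
    exact (hfE.1.aestronglyMeasurable.aemeasurable).const_mul _
  have hcomp : ∀ m, ∀ᵐ p : X × G ∂P, h m (F p) = h' m p.1 := by
    intro m
    have hball : ∀ᵐ p : X × G ∂P, ∀ f ∈ ((cm m).support : Set (X → ℂ)),
        f (F p) = lam f * f p.1 :=
      (ae_ball_iff (cm m).support.countable_toSet).2 fun f hf => hlam f (hcmsupp m hf)
    filter_upwards [hball] with p hp'
    have hp : ∀ f ∈ (cm m).support, f (F p) = lam f * f p.1 :=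
      fun f hf => hp' f (Finset.mem_coe.mpr hf)
    have h1 : h m (F p) = ∑ f ∈ (cm m).support, (cm m) f * f (F p) := by
      rw [← hcmsum m, Finsupp.sum]
      simp [Finset.sum_apply]
    rw [h1]
    refine Finset.sum_congr rfl fun f hf => ?_
    rw [hp f hf]
    ring
  set H : ℕ → X → ℂ := fun m => (hh'aem m).mk (h' m) with hHdef
  have hHm : ∀ m, Measurable (H m) := fun m => (hh'aem m).measurable_mk
  have hHeq : ∀ m, h' m =ᵐ[μ] H m := fun m => (hh'aem m).ae_eq_mk
  have haeP : ∀ᵐ p : X × G ∂P, Tendsto (fun j => H (ns j) p.1) atTop (𝓝 (g0 (F p))) := by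
    have h1 : ∀ᵐ p : X × G ∂P, Tendsto (fun j => h (ns j) (F p)) atTop (𝓝 (g0 (F p))) :=
      ae_pull hF.aemeasurable hFmap haeconv
    have h2 : ∀ᵐ p : X × G ∂P, ∀ j : ℕ, h (ns j) (F p) = H (ns j) p.1 := by
      rw [ae_all_iff]
      intro j
      have h3 : ∀ᵐ p : X × G ∂P, h' (ns j) p.1 = H (ns j) p.1 :=
        ae_pull measurable_fst.aemeasurable map_fst_eq (hHeq (ns j))
      filter_upwards [hcomp (ns j), h3] with p e1 e2
      rw [e1, e2]
    filter_upwards [h1, h2] with p e1 e2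
    exact Tendsto.congr e2 e1
  set C : Set X := {x | ∃ l : ℂ, Tendsto (fun j => H (ns j) x) atTop (𝓝 l)} with hCdef
  have hCfull : ∀ᵐ x ∂μ, x ∈ C := by
    have h1 : ∀ᵐ p : X × G ∂P, p.1 ∈ C := by
      filter_upwards [haeP] with p hp
      exact ⟨_, hp⟩
    have h0 : P {p : X × G | ¬ p.1 ∈ C} = 0 := by simpa [ae_iff] using h1
    have hset : {p : X × G | ¬ p.1 ∈ C} = {x | ¬ x ∈ C} ×ˢ (univ : Set G) := by
      ext p; simp
    rw [hset, Measure.prod_prod, measure_univ, mul_one] at h0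
    exact ae_iff.mpr h0
  obtain ⟨G₀, hG₀m, hG₀t⟩ := measurable_limit_of_tendsto_metrizable_ae
    (fun j => (hHm (ns j)).aemeasurable) (by filter_upwards [hCfull] with x hx; exact hx)
  have huniq : ∀ᵐ p : X × G ∂P, g0 (F p) = G₀ p.1 := by
    have h1 : ∀ᵐ p : X × G ∂P, Tendsto (fun j => H (ns j) p.1) atTop (𝓝 (G₀ p.1)) :=
      ae_pull measurable_fst.aemeasurable map_fst_eq hG₀t
    filter_upwards [haeP, h1] with p e1 e2
    exact tendsto_nhds_unique e1 e2
  have htan : Measurable Real.tan := by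
    have h1 : Real.tan = fun x => Real.sin x / Real.cos x :=
      funext fun x => Real.tan_eq_sin_div_cos x
    rw [h1]
    exact Real.measurable_sin.div Real.measurable_cos
  set S : X → X :=
    fun x => Function.extend ι id (fun _ => Classical.arbitrary X) (Real.tan ((G₀ x).re))
    with hSdef
  have hSm : Measurable S :=
    (hι.measurable_extend measurable_id measurable_const).comp
      (htan.comp (Complex.measurable_re.comp hG₀m))
  have hproj : ∀ᵐ p : X × G ∂P, (Stilde p).1 = S p.1 := by
    filter_upwards [huniq] with p hp
    have h1 : Real.arctan (ι (F p)) = (G₀ p.1).re := by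
      have h2 := congrArg Complex.re hp
      rw [show g0 (F p) = ((Real.arctan (ι (F p)) : ℝ) : ℂ) from rfl, Complex.ofReal_re] at h2
      exact h2
    have h2 : ι (F p) = Real.tan ((G₀ p.1).re) := by rw [← h1, Real.tan_arctan]
    show F p = S p.1
    rw [hSdef]
    simp only
    rw [← h2, hι.injective.extend_apply]
    rfl
  have hSmp : MeasurePreserving S μ μ := by
    refine ⟨hSm, ?_⟩
    have h1 : Measure.map S μ = Measure.map (S ∘ Prod.fst) P := by
      rw [← Measure.map_map hSm measurable_fst, map_fst_eq]
    have h2 : (S ∘ Prod.fst : X × G → X) =ᵐ[P] F := by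
      filter_upwards [hproj] with p hp
      exact hp.symm
    rw [h1, Measure.map_congr h2, hFmap]
  have hScomm : ∀ᵐ x ∂μ, S (T x) = T (S x) := by
    have hkey : ∀ᵐ p : X × G ∂P, S (T p.1) = T (S p.1) := by
      have h1 : ∀ᵐ p : X × G ∂P, (Stilde (T p.1, ψ p.1 * p.2)).1 = S (T p.1) := by
        have := ae_pull hTψm.aemeasurable hTψ.toMeasurePreserving.map_eq hproj
        exact this
      filter_upwards [hFT, h1, hproj] with p e1 e2 e3
      rw [← e2]
      show F (T p.1, ψ p.1 * p.2) = T (S p.1)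
      rw [e1, hFdef]
      simp only
      rw [e3]
    exact ae_of_comp_fst (h₁ := fun x => S (T x)) (h₂ := fun x => T (S x)) hkey
  exact ⟨S, hSmp, hproj, hScomm⟩


theorem part1core (hT : Ergodic (⇑T) μ) (hds : HasDiscreteSpectrum (⇑T) μ) (hψ : Measurable ψ)
    (hTψ : Ergodic (fun p : X × G => (T p.1, ψ p.1 * p.2)) (μ.prod ν))
    {Stilde : X × G → X × G} (hSt : MeasurePreserving Stilde (μ.prod ν) (μ.prod ν))
    (hqi : QuasiInvertible Stilde (μ.prod ν))
    (hStc : Stilde ∘ (fun p : X × G => (T p.1, ψ p.1 * p.2)) =ᵐ[μ.prod ν]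
      (fun p : X × G => (T p.1, ψ p.1 * p.2)) ∘ Stilde) :
    ∃ (S : X → X) (f : X → G) (v : G ≃* G),
      MeasurePreserving S μ μ ∧ QuasiInvertible S μ ∧ (S ∘ ⇑T =ᵐ[μ] ⇑T ∘ S) ∧
      Measurable f ∧ Continuous ⇑v ∧
      Stilde =ᵐ[μ.prod ν] fun p : X × G => (S p.1, f p.1 * v p.2) := by
  obtain ⟨W, hW, hWS, hSW⟩ := hqi
  haveI : ν.IsMulRightInvariant := nu_right_inv
  haveI : Nonempty G := ⟨1⟩
  classical
  set P := μ.prod ν with hP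
  set Tψ : X × G → X × G := fun p => (T p.1, ψ p.1 * p.2) with hTψdef
  have hTψm : Measurable Tψ := Tψ_measurable hψ
  have hTψmp : MeasurePreserving Tψ P P := hTψ.toMeasurePreserving
  have hWS' : ∀ᵐ q ∂P, W (Stilde q) = q := hWS
  have hSW' : ∀ᵐ q ∂P, Stilde (W q) = q := hSW
  have hStc' : ∀ᵐ q ∂P, Stilde (Tψ q) = Tψ (Stilde q) := hStc
  -- W commutes a.e. with Tψ
  have hWc : ∀ᵐ p ∂P, W (Tψ p) = Tψ (W p) := by
    have h2 : ∀ᵐ p ∂P, W (Stilde (Tψ (W p))) = Tψ (W p) :=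
      ae_pull (hTψm.comp hW.measurable).aemeasurable (hTψmp.comp hW).map_eq hWS'
    have h3 : ∀ᵐ p ∂P, Stilde (Tψ (W p)) = Tψ (Stilde (W p)) :=
      ae_pull hW.measurable.aemeasurable hW.map_eq hStc'
    filter_upwards [hSW', h2, h3] with p e1 e2 e3
    conv_lhs => rw [← e1]
    rw [← e3, e2]
  have hWcomp : W ∘ Tψ =ᵐ[P] Tψ ∘ W := hWc
  obtain ⟨S, hSmp, hproj, hScommPt⟩ := stepA hT hds hψ hTψ hSt hStc
  obtain ⟨SW, hSWmp, hprojW, hSWcommPt⟩ := stepA hT hds hψ hTψ hW hWcomp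
  -- S ∘ SW = id and SW ∘ S = id a.e.
  have hSSW : ∀ᵐ x ∂μ, S (SW x) = x := by
    have hkey : ∀ᵐ p : X × G ∂P, S (SW p.1) = p.1 := by
      have h1 : ∀ᵐ p ∂P, (Stilde (W p)).1 = S (W p).1 :=
        ae_pull hW.measurable.aemeasurable hW.map_eq hproj
      filter_upwards [hprojW, h1, hSW'] with p e1 e2 e3
      rw [← e1, ← e2, e3]
    exact ae_of_comp_fst (h₁ := fun x => S (SW x)) (h₂ := fun x => x) hkey
  have hSWS : ∀ᵐ x ∂μ, SW (S x) = x := by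
    have hkey : ∀ᵐ p : X × G ∂P, SW (S p.1) = p.1 := by
      have h1 : ∀ᵐ p ∂P, (W (Stilde p)).1 = SW (Stilde p).1 :=
        ae_pull hSt.measurable.aemeasurable hSt.map_eq hprojW
      filter_upwards [hproj, h1, hWS'] with p e1 e2 e3
      rw [← e1, ← e2, e3]
    exact ae_of_comp_fst (h₁ := fun x => SW (S x)) (h₂ := fun x => x) hkey
  -- right fiber translations
  set τ : G → X × G → X × G := fun k p => (p.1, p.2 * k) with hτdef
  have hτmp : ∀ k, MeasurePreserving (τ k) P P := fun k =>
    (MeasurePreserving.id μ).prod (measurePreserving_mul_right ν k)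
  have hτc : ∀ k p, τ k (Tψ p) = Tψ (τ k p) := by
    intro k p
    show (T p.1, ψ p.1 * p.2 * k) = (T p.1, ψ p.1 * (p.2 * k))
    rw [mul_assoc]
  set R : G → X × G → X × G := fun k p => Stilde (τ k (W p)) with hRdef
  have hRmp : ∀ k, MeasurePreserving (R k) P P := fun k => hSt.comp ((hτmp k).comp hW)
  have hRc : ∀ k, (R k) ∘ Tψ =ᵐ[P] Tψ ∘ (R k) := by
    intro k
    have h1 : ∀ᵐ p ∂P, Stilde (Tψ (τ k (W p))) = Tψ (Stilde (τ k (W p))) :=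
      ae_pull ((hτmp k).comp hW).measurable.aemeasurable ((hτmp k).comp hW).map_eq hStc'
    filter_upwards [hWc, h1] with p e1 e2
    show Stilde (τ k (W (Tψ p))) = Tψ (Stilde (τ k (W p)))
    rw [e1, hτc k (W p)]
    exact e2
  have hRfst : ∀ k, ∀ᵐ p ∂P, (R k p).1 = p.1 := by
    intro k
    have h1 : ∀ᵐ p ∂P, (Stilde (τ k (W p))).1 = S ((τ k (W p)).1) :=
      ae_pull ((hτmp k).comp hW).measurable.aemeasurable ((hτmp k).comp hW).map_eq hproj
    have h2 : ∀ᵐ p : X × G ∂P, S (SW p.1) = p.1 :=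
      ae_pull measurable_fst.aemeasurable map_fst_eq hSSW
    filter_upwards [h1, hprojW, h2] with p e1 e2 e3
    show (Stilde (τ k (W p))).1 = p.1
    rw [e1]
    show S ((W p).1) = p.1
    rw [e2]
    exact e3
  have hRtrans : ∀ k, ∃ g₀ : G, ∀ᵐ p ∂P, R k p = (p.1, p.2 * g₀) := fun k =>
    P2core hψ hTψ (hRmp k) (hRc k) (hRfst k)
  choose u hu using hRtrans
  have huniqR : ∀ k a, (∀ᵐ p ∂P, R k p = (p.1, p.2 * a)) → u k = a := by
    intro k a h
    refine trans_unique (μ := μ) (ν := ν) (a := u k) (b := a) ?_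
    filter_upwards [h, hu k] with p e1 e2
    exact congrArg Prod.snd (e2.symm.trans e1)
  -- group law for u
  have humul : ∀ k l, u (k * l) = u k * u l := by
    intro k l
    apply huniqR
    have h1 : ∀ᵐ p ∂P, W (Stilde (τ k (W p))) = τ k (W p) :=
      ae_pull ((hτmp k).comp hW).measurable.aemeasurable ((hτmp k).comp hW).map_eq hWS'
    have h2 : ∀ᵐ p ∂P, R l (R k p) = ((R k p).1, (R k p).2 * u l) :=
      ae_pull (hRmp k).measurable.aemeasurable (hRmp k).map_eq (hu l)
    filter_upwards [h1, h2, hu k] with p e1 e2 e3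
    show Stilde (τ (k * l) (W p)) = (p.1, p.2 * (u k * u l))
    have h3 : τ (k * l) (W p) = τ l (τ k (W p)) := by
      show ((W p).1, (W p).2 * (k * l)) = (((W p).1, (W p).2 * k).1, ((W p).1, (W p).2 * k).2 * l)
      simp [mul_assoc]
    rw [h3, ← e1]
    have h4 : Stilde (τ l (W (Stilde (τ k (W p))))) = R l (R k p) := rfl
    rw [h4, e2, e3]
    show (p.1, p.2 * u k * u l) = (p.1, p.2 * (u k * u l))
    rw [mul_assoc]
  -- the inverse family
  set R' : G → X × G → X × G := fun k p => W (τ k (Stilde p)) with hR'def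
  have hR'mp : ∀ k, MeasurePreserving (R' k) P P := fun k => hW.comp ((hτmp k).comp hSt)
  have hR'c : ∀ k, (R' k) ∘ Tψ =ᵐ[P] Tψ ∘ (R' k) := by
    intro k
    have h1 : ∀ᵐ p ∂P, W (Tψ (τ k (Stilde p))) = Tψ (W (τ k (Stilde p))) :=
      ae_pull ((hτmp k).comp hSt).measurable.aemeasurable ((hτmp k).comp hSt).map_eq hWc
    filter_upwards [hStc', h1] with p e1 e2
    show W (τ k (Stilde (Tψ p))) = Tψ (W (τ k (Stilde p)))
    rw [e1, hτc k (Stilde p)]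
    exact e2
  have hR'fst : ∀ k, ∀ᵐ p ∂P, (R' k p).1 = p.1 := by
    intro k
    have h1 : ∀ᵐ p ∂P, (W (τ k (Stilde p))).1 = SW ((τ k (Stilde p)).1) :=
      ae_pull ((hτmp k).comp hSt).measurable.aemeasurable ((hτmp k).comp hSt).map_eq hprojW
    have h2 : ∀ᵐ p : X × G ∂P, SW (S p.1) = p.1 :=
      ae_pull measurable_fst.aemeasurable map_fst_eq hSWS
    filter_upwards [h1, hproj, h2] with p e1 e2 e3
    show (W (τ k (Stilde p))).1 = p.1
    rw [e1]
    show SW ((Stilde p).1) = p.1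
    rw [e2]
    exact e3
  have hR'trans : ∀ k, ∃ g₀ : G, ∀ᵐ p ∂P, R' k p = (p.1, p.2 * g₀) := fun k =>
    P2core hψ hTψ (hR'mp k) (hR'c k) (hR'fst k)
  choose u' hu' using hR'trans
  have huniqR' : ∀ k a, (∀ᵐ p ∂P, R' k p = (p.1, p.2 * a)) → u' k = a := by
    intro k a h
    refine trans_unique (μ := μ) (ν := ν) (a := u' k) (b := a) ?_
    filter_upwards [h, hu' k] with p e1 e2
    exact congrArg Prod.snd (e2.symm.trans e1)
  -- u' ∘ u = id
  have hu'u : ∀ k, u' (u k) = k := by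
    intro k
    apply huniqR'
    have h1 : ∀ᵐ p ∂P, R k (Stilde p) = ((Stilde p).1, (Stilde p).2 * u k) :=
      ae_pull hSt.measurable.aemeasurable hSt.map_eq (hu k)
    have h2 : ∀ᵐ p ∂P, W (Stilde (τ k p)) = τ k p :=
      ae_pull (hτmp k).measurable.aemeasurable (hτmp k).map_eq hWS'
    filter_upwards [h1, h2, hWS'] with p e1 e2 e3
    show W (τ (u k) (Stilde p)) = (p.1, p.2 * k)
    have h3 : τ (u k) (Stilde p) = R k (Stilde p) := by
      rw [e1]
    rw [h3]
    show W (Stilde (τ k (W (Stilde p)))) = (p.1, p.2 * k)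
    rw [e3, e2]
  -- u ∘ u' = id
  have huu' : ∀ k, u (u' k) = k := by
    intro k
    apply huniqR
    have h1 : ∀ᵐ p ∂P, R' k (W p) = ((W p).1, (W p).2 * u' k) :=
      ae_pull hW.measurable.aemeasurable hW.map_eq (hu' k)
    have h2 : ∀ᵐ p ∂P, Stilde (W (τ k p)) = τ k p :=
      ae_pull (hτmp k).measurable.aemeasurable (hτmp k).map_eq hSW'
    filter_upwards [h1, h2, hSW'] with p e1 e2 e3
    show Stilde (τ (u' k) (W p)) = (p.1, p.2 * k)
    have h3 : τ (u' k) (W p) = R' k (W p) := by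
      rw [e1]
    rw [h3]
    show Stilde (W (τ k (Stilde (W p)))) = (p.1, p.2 * k)
    rw [e3, e2]
  -- measurability of u
  set Ξ : (X × G) × G → G := fun q => (q.1.2)⁻¹ * (Stilde (τ q.2 (W q.1))).2 with hΞdef
  have hτWm : Measurable fun q : (X × G) × G => τ q.2 (W q.1) := by
    show Measurable fun q : (X × G) × G => ((W q.1).1, (W q.1).2 * q.2)
    exact ((measurable_fst.comp (hW.measurable.comp measurable_fst)).prodMk
      ((measurable_snd.comp (hW.measurable.comp measurable_fst)).mul measurable_snd))
  have hΞm : Measurable Ξ :=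
    ((measurable_snd.comp measurable_fst).inv).mul
      (measurable_snd.comp (hSt.measurable.comp hτWm))
  have hΞconst : ∀ k, ∀ᵐ p ∂P, Ξ (p, k) = u k := by
    intro k
    filter_upwards [hu k] with p e1
    show p.2⁻¹ * (Stilde (τ k (W p))).2 = u k
    have h1 : (Stilde (τ k (W p))).2 = p.2 * u k := congrArg Prod.snd e1
    rw [h1]
    group
  have hum : Measurable u := by
    intro B hB
    have hDm : MeasurableSet {q : (X × G) × G | Ξ q ∈ B} := hΞm hB
    have hmeasfun : Measurable fun k => P ((fun p => (p, k)) ⁻¹' {q : (X × G) × G | Ξ q ∈ B}) :=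
      measurable_measure_prodMk_right hDm
    have hset : u ⁻¹' B =
        (fun k => P ((fun p => (p, k)) ⁻¹' {q : (X × G) × G | Ξ q ∈ B})) ⁻¹' {1} := by
      ext k
      simp only [mem_preimage, mem_singleton_iff]
      constructor
      · intro hk
        have hfull : ∀ᵐ p ∂P, p ∈ (fun p => (p, k)) ⁻¹' {q : (X × G) × G | Ξ q ∈ B} := by
          filter_upwards [hΞconst k] with p e1
          show Ξ (p, k) ∈ B
          rw [e1]; exact hk
        have heq : P ((fun p => (p, k)) ⁻¹' {q : (X × G) × G | Ξ q ∈ B}) = P univ :=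
          measure_congr (Filter.eventuallyEq_univ.mpr hfull)
        rw [heq]
        exact measure_univ
      · intro hk
        by_contra hk'
        have hempty : P ((fun p => (p, k)) ⁻¹' {q : (X × G) × G | Ξ q ∈ B}) = 0 := by
          rw [measure_eq_zero_iff_ae_notMem]
          filter_upwards [hΞconst k] with p e1
          show ¬ Ξ (p, k) ∈ B
          rw [e1]; exact hk'
        rw [hempty] at hk
        exact zero_ne_one hk
    rw [hset]
    exact hmeasfun (measurableSet_singleton 1)
  -- u is a continuous
  have hu1 : u 1 = 1 := by
    have h1 := humul 1 1
    rw [one_mul] at h1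
    exact (left_eq_mul.1 h1)
  have hucont : Continuous u := by
    have hcont1 : ContinuousAt u 1 := by
      rw [ContinuousAt, hu1, Filter.tendsto_def]
      intro U hU
      obtain ⟨O, hOU, hOopen, hO1⟩ := mem_nhds_iff.1 hU
      have hc : Continuous fun q : G × G => q.1 * q.2 * q.1⁻¹ :=
        (continuous_fst.mul continuous_snd).mul continuous_fst.inv
      have hsub : (univ : Set G) ×ˢ ({1} : Set G) ⊆
          (fun q : G × G => q.1 * q.2 * q.1⁻¹) ⁻¹' O := by
        rintro ⟨g, x⟩ ⟨-, hx⟩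
        simp only [mem_singleton_iff] at hx
        subst hx
        show g * 1 * g⁻¹ ∈ O
        simpa using hO1
      obtain ⟨V₁, V₂, hV₁o, hV₂o, hV₁s, hV₂s, hVsub⟩ :=
        generalized_tube_lemma isCompact_univ isCompact_singleton (hOopen.preimage hc) hsub
      have hV₂nhds : V₂ ∈ 𝓝 (1 : G) := hV₂o.mem_nhds (hV₂s rfl)
      obtain ⟨V, hVnhds, hVdiv⟩ := exists_nhds_split_inv hV₂nhds
      have hVo1 : (1 : G) ∈ interior V := mem_interior_iff_mem_nhds.2 hVnhds
      have hcover : (univ : Set G) ⊆ ⋃ g : G, (g * ·) '' interior V := fun x _ =>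
        mem_iUnion.2 ⟨x, ⟨1, hVo1, by simp⟩⟩
      obtain ⟨t, ht⟩ := isCompact_univ.elim_finite_subcover (fun g : G => (g * ·) '' interior V)
        (fun g => (isOpenMap_mul_left g) _ isOpen_interior) hcover
      have hexists : ∃ g ∈ t, ν (u ⁻¹' ((g * ·) '' interior V)) ≠ 0 := by
        by_contra hno
        push_neg at hno
        have hzero : ν (univ : Set G) = 0 := by
          have hsub2 : (univ : Set G) ⊆ ⋃ g ∈ t, u ⁻¹' ((g * ·) '' interior V) := by
            intro x _
            obtain ⟨g, hg1, hg2⟩ := mem_iUnion₂.1 (ht (mem_univ (u x)))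
            exact mem_iUnion₂.2 ⟨g, hg1, hg2⟩
          refine le_antisymm ?_ zero_le
          calc ν univ ≤ ν (⋃ g ∈ t, u ⁻¹' ((g * ·) '' interior V)) := measure_mono hsub2
            _ ≤ ∑ g ∈ t, ν (u ⁻¹' ((g * ·) '' interior V)) := measure_biUnion_finset_le _ _
            _ = 0 := Finset.sum_eq_zero fun g hg => hno g hg
        rw [measure_univ] at hzero
        exact one_ne_zero hzero
      obtain ⟨g, hgt, hgpos⟩ := hexists
      have hAm : MeasurableSet (u ⁻¹' ((g * ·) '' interior V)) :=
        hum ((isOpenMap_mul_left g) _ isOpen_interior).measurableSet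
      have hstein : (u ⁻¹' ((g * ·) '' interior V)) / (u ⁻¹' ((g * ·) '' interior V)) ∈
          𝓝 (1 : G) :=
        Measure.div_mem_nhds_one_of_haar_pos ν _ hAm (pos_iff_ne_zero.mpr hgpos)
      refine mem_of_superset hstein ?_
      intro x hx
      rw [Set.mem_div] at hx
      obtain ⟨a, ha, b, hb, rfl⟩ := hx
      obtain ⟨v₁, hv₁, hav⟩ := ha
      obtain ⟨v₂, hv₂, hbv⟩ := hb
      show u (a / b) ∈ U
      have hbinv : u b⁻¹ = (u b)⁻¹ := by
        have h5 := humul b b⁻¹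
        rw [mul_inv_cancel, hu1] at h5
        exact (eq_inv_of_mul_eq_one_right h5.symm)
      have hdiv : u (a / b) = u a / u b := by
        rw [div_eq_mul_inv, humul, hbinv, div_eq_mul_inv]
      rw [hdiv, ← hav, ← hbv]
      have h5 : g * v₁ / (g * v₂) = g * (v₁ / v₂) * g⁻¹ := by
        simp [div_eq_mul_inv, mul_inv_rev, mul_assoc]
      rw [h5]
      apply hOU
      have h6 : v₁ / v₂ ∈ V₂ := hVdiv v₁ (interior_subset hv₁) v₂ (interior_subset hv₂)
      exact hVsub (mk_mem_prod (hV₁s (mem_univ g)) h6)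
    exact continuous_of_continuousAt_one (MonoidHom.mk' u humul) hcont1
  -- the relation Stilde ∘ τ_k = τ_{u k} ∘ Stilde, jointly in k
  have hrel : ∀ k, ∀ᵐ p ∂P, Stilde (τ k p) = ((Stilde p).1, (Stilde p).2 * u k) := by
    intro k
    have h1 : ∀ᵐ p ∂P, R k (Stilde p) = ((Stilde p).1, (Stilde p).2 * u k) :=
      ae_pull hSt.measurable.aemeasurable hSt.map_eq (hu k)
    filter_upwards [h1, hWS'] with p e1 e2
    show Stilde (τ k p) = ((Stilde p).1, (Stilde p).2 * u k)
    rw [← e1]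
    show Stilde (τ k p) = Stilde (τ k (W (Stilde p)))
    rw [e2]
  letI := upgradeStandardBorel X
  have hEm : MeasurableSet {q : (X × G) × G |
      Stilde (τ q.2 q.1) = ((Stilde q.1).1, (Stilde q.1).2 * u q.2)} := by
    have hm1 : Measurable fun q : (X × G) × G => Stilde (τ q.2 q.1) := by
      refine hSt.measurable.comp ?_
      show Measurable fun q : (X × G) × G => (q.1.1, q.1.2 * q.2)
      exact ((measurable_fst.comp measurable_fst).prodMk
        ((measurable_snd.comp measurable_fst).mul measurable_snd))
    have hm2 : Measurable fun q : (X × G) × G =>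
        ((Stilde q.1).1, (Stilde q.1).2 * u q.2) := by
      refine Measurable.prodMk ?_ ?_
      · exact measurable_fst.comp (hSt.measurable.comp measurable_fst)
      · exact (measurable_snd.comp (hSt.measurable.comp measurable_fst)).mul
          (hum.comp measurable_snd)
    exact StronglyMeasurable.measurableSet_eq_fun hm1.stronglyMeasurable hm2.stronglyMeasurable
  have haejoint : ∀ᵐ q ∂(P.prod ν),
      Stilde (τ q.2 q.1) = ((Stilde q.1).1, (Stilde q.1).2 * u q.2) := by
    rw [ae_iff]
    have hcompl : {q : (X × G) × G |
        ¬ Stilde (τ q.2 q.1) = ((Stilde q.1).1, (Stilde q.1).2 * u q.2)} =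
        {q : (X × G) × G |
        Stilde (τ q.2 q.1) = ((Stilde q.1).1, (Stilde q.1).2 * u q.2)}ᶜ := rfl
    rw [hcompl, Measure.prod_apply_symm hEm.compl]
    have hzero : ∀ k : G, P ((fun p => (p, k)) ⁻¹' {q : (X × G) × G |
        Stilde (τ q.2 q.1) = ((Stilde q.1).1, (Stilde q.1).2 * u q.2)}ᶜ) = 0 := by
      intro k
      rw [measure_eq_zero_iff_ae_notMem]
      filter_upwards [hrel k] with p e1
      show ¬ ¬ Stilde (τ k p) = ((Stilde p).1, (Stilde p).2 * u k)
      exact not_not.mpr e1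
    calc ∫⁻ k, P ((fun p => (p, k)) ⁻¹' {q : (X × G) × G |
          Stilde (τ q.2 q.1) = ((Stilde q.1).1, (Stilde q.1).2 * u q.2)}ᶜ) ∂ν
        = ∫⁻ _, 0 ∂ν := lintegral_congr fun k => hzero k
      _ = 0 := lintegral_zero
  -- change of variables: replace (p, k) by (p, p.2⁻¹ k)
  have hΩmp : MeasurePreserving (fun q : (X × G) × G => (q.1, (q.1.2)⁻¹ * q.2))
      (P.prod ν) (P.prod ν) := by
    have hgm : Measurable (Function.uncurry fun (p : X × G) (k : G) => (p.2)⁻¹ * k) := by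
      show Measurable fun q : (X × G) × G => (q.1.2)⁻¹ * q.2
      exact ((measurable_snd.comp measurable_fst).inv).mul measurable_snd
    have hae : ∀ᵐ p : X × G ∂P, Measure.map ((fun (p : X × G) (k : G) => (p.2)⁻¹ * k) p) ν = ν :=
      Filter.Eventually.of_forall fun p => map_mul_left_eq_self ν (p.2)⁻¹
    have h := MeasurePreserving.skew_product (f := (id : X × G → X × G))
      (g := fun (p : X × G) (k : G) => (p.2)⁻¹ * k) (MeasurePreserving.id P) hgm hae
    exact h
  have haej2 : ∀ᵐ q ∂(P.prod ν),
      Stilde (q.1.1, q.2) = ((Stilde q.1).1, (Stilde q.1).2 * ((u q.1.2)⁻¹ * u q.2)) := by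
    have h1 := ae_pull hΩmp.measurable.aemeasurable hΩmp.map_eq haejoint
    filter_upwards [h1] with q e1
    have h2 : τ ((q.1.2)⁻¹ * q.2) q.1 = (q.1.1, q.2) := by
      show (q.1.1, q.1.2 * ((q.1.2)⁻¹ * q.2)) = (q.1.1, q.2)
      rw [mul_inv_cancel_left]
    have h3 : u ((q.1.2)⁻¹ * q.2) = (u q.1.2)⁻¹ * u q.2 := by
      have hbinv : u (q.1.2)⁻¹ = (u q.1.2)⁻¹ := by
        have h5 := humul q.1.2 (q.1.2)⁻¹
        rw [mul_inv_cancel, hu1] at h5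
        exact (eq_inv_of_mul_eq_one_right h5.symm)
      rw [humul, hbinv]
    rw [h2, h3] at e1
    exact e1
  have haej3 : ∀ᵐ k ∂ν, ∀ᵐ p ∂P,
      Stilde (p.1, k) = ((Stilde p).1, (Stilde p).2 * ((u p.2)⁻¹ * u k)) := by
    have hswap := ae_pull (measurable_swap).aemeasurable
      (Measure.measurePreserving_swap (μ := ν) (ν := P)).map_eq haej2
    exact Measure.ae_ae_of_ae_prod hswap
  haveI : NeBot (ae ν) := ae_neBot.mpr (IsProbabilityMeasure.ne_zero _)
  obtain ⟨k₀, hk₀⟩ := haej3.exists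
  set f : X → G := fun x => (Stilde (x, k₀)).2 * (u k₀)⁻¹ with hfdef
  have hfm : Measurable f :=
    (measurable_snd.comp (hSt.measurable.comp (measurable_id.prodMk measurable_const))).mul_const _
  -- assemble the automorphism
  set v : G ≃* G :=
    { toFun := u, invFun := u', left_inv := hu'u, right_inv := huu', map_mul' := humul }
    with hvdef
  have hmain : Stilde =ᵐ[P] fun p : X × G => (S p.1, f p.1 * u p.2) := by
    filter_upwards [hk₀, hproj] with p e1 e2
    have h2 : (Stilde (p.1, k₀)).2 = (Stilde p).2 * ((u p.2)⁻¹ * u k₀) := congrArg Prod.snd e1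
    have h3 : f p.1 * u p.2 = (Stilde p).2 := by
      show (Stilde (p.1, k₀)).2 * (u k₀)⁻¹ * u p.2 = (Stilde p).2
      rw [h2]
      group
    show Stilde p = (S p.1, f p.1 * u p.2)
    rw [← e2, h3]
  exact ⟨S, f, v, hSmp, ⟨SW, hSWmp, hSWS, hSSW⟩, hScommPt, hfm, hucont, hmain⟩

end Stmt2Aux

/-- **Structure of the centralizer of an ergodic compact group extension over a
discrete-spectrum base.**  Every element of `C(T_ψ)` is of the form
`(x, g) ↦ (S x, f x * v g)` with `S ∈ C(T)`, `f : X → G` measurable and `v` a continuous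
group automorphism of `G`; moreover two elements of `C(T_ψ)` over the same `S ∈ C(T)` differ
by a right translation `τ_{g₀} (x, g) = (x, g * g₀)`. -/
theorem stmt_2 {X : Type*} [MeasurableSpace X] [StandardBorelSpace X]
    {G : Type*} [Group G] [MetricSpace G] [CompactSpace G] [IsTopologicalGroup G]
    [MeasurableSpace G] [BorelSpace G]
    (μ : Measure X) [IsProbabilityMeasure μ]
    (T : X ≃ᵐ X) (hT : Ergodic (⇑T) μ) (hds : HasDiscreteSpectrum (⇑T) μ)
    (ν : Measure G) [IsProbabilityMeasure ν] [ν.IsHaarMeasure]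
    (ψ : X → G) (hψ : Measurable ψ)
    (hTψ : Ergodic (fun p : X × G => (T p.1, ψ p.1 * p.2)) (μ.prod ν)) :
    (∀ Stilde : X × G → X × G,
      MeasurePreserving Stilde (μ.prod ν) (μ.prod ν) →
      QuasiInvertible Stilde (μ.prod ν) →
      (Stilde ∘ (fun p : X × G => (T p.1, ψ p.1 * p.2))
        =ᵐ[μ.prod ν] (fun p : X × G => (T p.1, ψ p.1 * p.2)) ∘ Stilde) →
      ∃ (S : X → X) (f : X → G) (v : G ≃* G),
        MeasurePreserving S μ μ ∧ QuasiInvertible S μ ∧ (S ∘ ⇑T =ᵐ[μ] ⇑T ∘ S) ∧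
        Measurable f ∧ Continuous ⇑v ∧
        Stilde =ᵐ[μ.prod ν] fun p : X × G => (S p.1, f p.1 * v p.2)) ∧
    (∀ Stilde Sbar : X × G → X × G,
      MeasurePreserving Stilde (μ.prod ν) (μ.prod ν) →
      QuasiInvertible Stilde (μ.prod ν) →
      (Stilde ∘ (fun p : X × G => (T p.1, ψ p.1 * p.2))
        =ᵐ[μ.prod ν] (fun p : X × G => (T p.1, ψ p.1 * p.2)) ∘ Stilde) →
      MeasurePreserving Sbar (μ.prod ν) (μ.prod ν) →
      QuasiInvertible Sbar (μ.prod ν) →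
      (Sbar ∘ (fun p : X × G => (T p.1, ψ p.1 * p.2))
        =ᵐ[μ.prod ν] (fun p : X × G => (T p.1, ψ p.1 * p.2)) ∘ Sbar) →
      ∀ S : X → X, MeasurePreserving S μ μ → QuasiInvertible S μ →
        (S ∘ ⇑T =ᵐ[μ] ⇑T ∘ S) →
        ((fun p : X × G => (Stilde p).1) =ᵐ[μ.prod ν] fun p : X × G => S p.1) →
        ((fun p : X × G => (Sbar p).1) =ᵐ[μ.prod ν] fun p : X × G => S p.1) →
        ∃ g₀ : G, Stilde =ᵐ[μ.prod ν] fun p : X × G => Sbar (p.1, p.2 * g₀)) := by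
  constructor
  · intro Stilde hmp hqi hcomm
    exact Stmt2Aux.part1core hT hds hψ hTψ hmp hqi hcomm
  · intro Stilde Sbar hSt hStqi hStc hSb hSbqi hSbc S hS hSqi hScomm hStp hSbp
    exact Stmt2Aux.part2core hψ hTψ hSt hStc hSb hSbqi hSbc hS hSqi hStp hSbp
end

section
/- Let G be a compact metric group with identity e and let x = b⁰ × b¹ × ⋯ ∈ G^ℕ be a generalized Morse sequence. Define the map y ↦ ŷ on G^ℤ by ŷ[n] = y[n+1]·y[n]^{-1}. Then: (i) this map is continuous, satisfies (Sy)^ = S(ŷ) (it commutes with the shift), and maps X(x) onto X(x̂), where x̂ ∈ G^ℕ is given by x̂[n] = x[n+1]·x[n]^{-1}; (ii) x̂ is a Toeplitz sequence, i.e., for each n ∈ ℕ there exists k ≥ 1 such that x̂[n + jk] = x̂[n] for all j ≥ 0. -/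
open Filter Topology

variable {G : Type*} [Group G]

/-- The set of words of length `L` occurring in the one-sided sequence `u`. -/
def wordsIn [TopologicalSpace G] (u : ℕ → G) (L : ℕ) : Set (Fin L → G) :=
  {w | ∃ k : ℕ, ∀ j : Fin L, w j = u (k + (j : ℕ))}

/-- The subshift `X(u)` determined by a one-sided sequence `u`: all two-sided sequences
every finite subword of which lies in the closure of the set of words occurring in `u`. -/
def subshiftOf [TopologicalSpace G] (u : ℕ → G) : Set (ℤ → G) :=
  {y | ∀ (a : ℤ) (L : ℕ), (fun j : Fin L => y (a + (j : ℕ))) ∈ closure (wordsIn u L)}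

/-- `morseLen lam t` is the length `n_t = λ_0 ⋯ λ_{t-1}` of the block `c_t = b⁰ × ⋯ × b^{t-1}`. -/
def morseLen (lam : ℕ → ℕ) : ℕ → ℕ
  | 0 => 1
  | t + 1 => morseLen lam t * lam t

/-- The block `c_t = b⁰ × b¹ × ⋯ × b^{t-1}` (as a function on `ℕ`; only the first
`morseLen lam t` values are relevant), where `(B × C)[i·m + j] = B[j] * C[i]`. -/
def morseBlock (lam : ℕ → ℕ) (b : ℕ → ℕ → G) : ℕ → ℕ → G
  | 0, _ => 1
  | t + 1, j => morseBlock lam b t (j % morseLen lam t) * b t (j / morseLen lam t)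

/-- The generalized Morse sequence `x = b⁰ × b¹ × ⋯` (when `λ_t ≥ 2` and `b^t[0] = e`,
`x` is the coordinatewise limit of the blocks `c_t`, and `x j = c_t j` for each `j < n_t`). -/
def morseSeq (lam : ℕ → ℕ) (b : ℕ → ℕ → G) : ℕ → G :=
  fun j => morseBlock lam b (j + 1) j

section morse
variable {G : Type*} [Group G] (lam : ℕ → ℕ) (b : ℕ → ℕ → G)

lemma two_pow_le_morseLen (hlam : ∀ t, 2 ≤ lam t) : ∀ t, 2 ^ t ≤ morseLen lam t := by
  intro t; induction t with
  | zero => simp [morseLen]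
  | succ t ih =>
    calc 2 ^ (t+1) = 2 ^ t * 2 := by ring
    _ ≤ morseLen lam t * lam t := Nat.mul_le_mul ih (hlam t)
    _ = morseLen lam (t+1) := rfl

lemma morseLen_pos (hlam : ∀ t, 2 ≤ lam t) (t : ℕ) : 0 < morseLen lam t :=
  lt_of_lt_of_le (Nat.two_pow_pos t) (two_pow_le_morseLen lam hlam t)

lemma morseLen_add (t u : ℕ) :
    morseLen lam (t + u) = morseLen lam t * morseLen (fun s => lam (t + s)) u := by
  induction u with
  | zero => simp [morseLen]
  | succ u ih =>
    show morseLen lam (t+u) * lam (t+u) = _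
    rw [ih]
    show _ = morseLen lam t * (morseLen (fun s => lam (t + s)) u * lam (t+u))
    ring

lemma morseLen_le_add (hlam : ∀ t, 2 ≤ lam t) (t u : ℕ) :
    morseLen lam t ≤ morseLen lam (t + u) := by
  rw [morseLen_add]
  exact Nat.le_mul_of_pos_right _ (morseLen_pos _ (fun s => hlam (t+s)) u)

lemma morseBlock_zero (hb0 : ∀ t, b t 0 = 1) (t : ℕ) : morseBlock lam b t 0 = 1 := by
  induction t with
  | zero => rfl
  | succ t ih =>
    show morseBlock lam b t (0 % morseLen lam t) * b t (0 / morseLen lam t) = 1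
    simp [ih, hb0]

lemma morseBlock_stable (hlam : ∀ t, 2 ≤ lam t) (hb0 : ∀ t, b t 0 = 1) (t u j : ℕ)
    (hj : j < morseLen lam t) : morseBlock lam b (t + u) j = morseBlock lam b t j := by
  induction u with
  | zero => rfl
  | succ u ih =>
    have hj2 : j < morseLen lam (t + u) := lt_of_lt_of_le hj (morseLen_le_add lam hlam t u)
    show morseBlock lam b (t+u) (j % morseLen lam (t+u)) * b (t+u) (j / morseLen lam (t+u)) = _
    rw [Nat.mod_eq_of_lt hj2, Nat.div_eq_of_lt hj2, hb0, mul_one, ih]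

lemma morseSeq_eq (hlam : ∀ t, 2 ≤ lam t) (hb0 : ∀ t, b t 0 = 1) (t j : ℕ)
    (hj : j < morseLen lam t) : morseSeq lam b j = morseBlock lam b t j := by
  have hj1 : j < morseLen lam (j + 1) :=
    lt_of_lt_of_le (lt_of_lt_of_le (Nat.lt_two_pow_self (n := j)) (Nat.pow_le_pow_right (by norm_num) j.le_succ))
      (two_pow_le_morseLen lam hlam (j+1))
  rcases Nat.le_total t (j+1) with h | h
  · obtain ⟨u, hu⟩ := Nat.le.dest h
    show morseBlock lam b (j+1) j = _
    rw [← hu]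
    exact morseBlock_stable lam b hlam hb0 t u j hj
  · obtain ⟨u, hu⟩ := Nat.le.dest h
    show morseBlock lam b (j+1) j = _
    rw [← hu]
    exact (morseBlock_stable lam b hlam hb0 (j+1) u j hj1).symm

lemma morseBlock_decomp (hlam : ∀ t, 2 ≤ lam t) :
    ∀ (u t j : ℕ), j < morseLen lam (t + u) →
    morseBlock lam b (t + u) j =
      morseBlock lam b t (j % morseLen lam t) *
        morseBlock (fun s => lam (t + s)) (fun s => b (t + s)) u (j / morseLen lam t) := by
  intro u
  induction u with
  | zero =>
    intro t j hj
    have hj' : j < morseLen lam t := hj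
    show morseBlock lam b t j = morseBlock lam b t (j % morseLen lam t) * 1
    rw [Nat.mod_eq_of_lt hj', mul_one]
  | succ u ih =>
    intro t j hj
    have hmul : morseLen lam (t + u) = morseLen lam t * morseLen (fun s => lam (t + s)) u :=
      morseLen_add lam t u
    have hpos : 0 < morseLen lam (t + u) := morseLen_pos lam hlam _
    have h1 : morseBlock lam b (t + (u+1)) j
        = morseBlock lam b (t + u) (j % morseLen lam (t + u)) * b (t + u) (j / morseLen lam (t + u)) := rfl
    rw [h1, ih t _ (Nat.mod_lt j hpos)]
    have e1 : j % morseLen lam (t + u) % morseLen lam t = j % morseLen lam t :=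
      Nat.mod_mod_of_dvd j ⟨_, hmul⟩
    have e2 : j % morseLen lam (t + u) / morseLen lam t
        = j / morseLen lam t % morseLen (fun s => lam (t + s)) u := by
      rw [hmul]; exact Nat.mod_mul_right_div_self j _ _
    have e3 : j / morseLen lam (t + u) = j / morseLen lam t / morseLen (fun s => lam (t + s)) u := by
      rw [hmul, Nat.div_div_eq_div_mul]
    rw [e1, e2, e3, mul_assoc]
    rfl

lemma xhat_of_mod (hlam : ∀ t, 2 ≤ lam t) (hb0 : ∀ t, b t 0 = 1)
    (x xhat : ℕ → G) (hx : x = morseSeq lam b) (hxhat : ∀ n, xhat n = x (n + 1) * (x n)⁻¹)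
    (t n : ℕ) (h : n + 1 < morseLen lam t) (i : ℕ) (hi : i % morseLen lam t = n) :
    xhat i = morseBlock lam b t (n+1) * (morseBlock lam b t n)⁻¹ := by
  set k := morseLen lam t with hk
  have hkpos : 0 < k := morseLen_pos lam hlam t
  set q := i / k with hq
  have hiq : i = k * q + n := by rw [hq, ← hi]; exact (Nat.div_add_mod i k).symm
  set u := i + 2 with hu
  set T := morseBlock (fun s => lam (t + s)) (fun s => b (t + s)) u with hT
  have hu1 : i + 1 < morseLen lam (t + u) := by
    have h1 : i + 1 ≤ 2 ^ i := Nat.lt_two_pow_self (n := i)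
    have h2 : (2:ℕ) ^ i < 2 ^ (t + u) := Nat.pow_lt_pow_right (by norm_num) (by omega)
    exact lt_of_le_of_lt h1 (lt_of_lt_of_le h2 (two_pow_le_morseLen lam hlam (t+u)))
  have hu0 : i < morseLen lam (t + u) := by omega
  have hx1 : x (i+1) = morseBlock lam b t ((i+1) % k) * T ((i+1) / k) := by
    rw [hx, morseSeq_eq lam b hlam hb0 (t+u) (i+1) hu1,
      morseBlock_decomp lam b hlam u t (i+1) hu1]
  have hx0 : x i = morseBlock lam b t (i % k) * T (i / k) := by
    rw [hx, morseSeq_eq lam b hlam hb0 (t+u) i hu0,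
      morseBlock_decomp lam b hlam u t i hu0]
  have m1 : (i+1) % k = n + 1 := by
    have : i + 1 = k * q + (n + 1) := by omega
    rw [this, Nat.mul_add_mod, Nat.mod_eq_of_lt h]
  have d1 : (i+1) / k = q := by
    have : i + 1 = k * q + (n + 1) := by omega
    rw [this, Nat.mul_add_div hkpos, Nat.div_eq_of_lt h, Nat.add_zero]
  rw [hxhat, hx1, hx0, m1, d1, hi, ← hq, mul_inv_rev]
  group
end morse

section topo
variable [TopologicalSpace G] [IsTopologicalGroup G]

def diffMap (L : ℕ) : (Fin (L+1) → G) → (Fin L → G) :=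
  fun w j => w j.succ * (w j.castSucc)⁻¹

lemma continuous_diffMap (L : ℕ) : Continuous (diffMap (G := G) L) :=
  continuous_pi fun j => ((continuous_apply j.succ).mul (continuous_apply j.castSucc).inv)

lemma wordsIn_diff {x xhat : ℕ → G} (hxhat : ∀ n, xhat n = x (n + 1) * (x n)⁻¹) (L : ℕ) :
    wordsIn xhat L = diffMap L '' wordsIn x (L+1) := by
  ext w
  constructor
  · rintro ⟨k, hk⟩
    refine ⟨fun j => x (k + (j : ℕ)), ⟨k, fun j => rfl⟩, ?_⟩
    funext j
    rw [diffMap, hk j, hxhat]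
    simp [Fin.val_succ, Fin.coe_castSucc, Nat.add_assoc]
  · rintro ⟨v, ⟨k, hk⟩, rfl⟩
    refine ⟨k, fun j => ?_⟩
    rw [diffMap, hk, hk, hxhat]
    simp [Fin.val_succ, Fin.coe_castSucc, Nat.add_assoc]

def restrMap (s L M : ℕ) (h : s + L ≤ M) : (Fin M → G) → (Fin L → G) :=
  fun w j => w ⟨s + (j : ℕ), by omega⟩

lemma continuous_restrMap (s L M : ℕ) (h : s + L ≤ M) :
    Continuous (restrMap (G := G) s L M h) :=
  continuous_pi fun j => continuous_apply _

lemma restrMap_mem_closure {x : ℕ → G} {s L M : ℕ} (h : s + L ≤ M) {v : Fin M → G}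
    (hv : v ∈ closure (wordsIn x M)) :
    restrMap s L M h v ∈ closure (wordsIn x L) := by
  have h1 : restrMap s L M h '' wordsIn x M ⊆ wordsIn x L := by
    rintro _ ⟨w, ⟨k, hk⟩, rfl⟩
    exact ⟨k + s, fun j => by
      rw [restrMap, hk]; congr 1
      show k + (s + (j : ℕ)) = k + s + (j : ℕ); omega⟩
  have h2 := image_closure_subset_closure_image (continuous_restrMap (G := G) s L M h)
    (s := wordsIn x M)
  exact closure_mono h1 (h2 ⟨v, hv, rfl⟩)

lemma closure_wordsIn_diff [CompactSpace G] [T2Space G] {x xhat : ℕ → G}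
    (hxhat : ∀ n, xhat n = x (n + 1) * (x n)⁻¹) (L : ℕ) :
    closure (wordsIn xhat L) ⊆ diffMap L '' closure (wordsIn x (L+1)) := by
  apply closure_minimal
  · rw [wordsIn_diff hxhat]
    exact Set.image_mono subset_closure
  · exact (isClosed_closure.isCompact.image (continuous_diffMap L)).isClosed
end topo


/-- **The Toeplitz factor of a Morse system.**  For a generalized Morse sequence `x` over a
compact metric group `G`, the map `y ↦ ŷ`, `ŷ[n] = y[n+1]·y[n]⁻¹` is continuous, commutes
with the shift, and maps `X(x)` onto `X(x̂)`; moreover `x̂` is a Toeplitz sequence. -/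
theorem stmt_3 {G : Type*} [Group G] [MetricSpace G] [CompactSpace G] [IsTopologicalGroup G]
    (lam : ℕ → ℕ) (hlam : ∀ t, 2 ≤ lam t)
    (b : ℕ → ℕ → G) (hb0 : ∀ t, b t 0 = 1)
    (x : ℕ → G) (hx : x = morseSeq lam b)
    (xhat : ℕ → G) (hxhat : ∀ n, xhat n = x (n + 1) * (x n)⁻¹)
    (hat : (ℤ → G) → (ℤ → G)) (hhat : ∀ y n, hat y n = y (n + 1) * (y n)⁻¹)
    (S : (ℤ → G) → (ℤ → G)) (hS : ∀ y n, S y n = y (n + 1)) :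
    (Continuous hat ∧ (∀ y, hat (S y) = S (hat y)) ∧
      hat '' subshiftOf x = subshiftOf xhat) ∧
    (∀ n : ℕ, ∃ k : ℕ, 1 ≤ k ∧ ∀ j : ℕ, xhat (n + j * k) = xhat n) := by
  have hcont : Continuous hat := by
    have he : hat = fun y => fun n => y (n + 1) * (y n)⁻¹ := by
      funext y n; exact hhat y n
    rw [he]
    exact continuous_pi fun n => ((continuous_apply (n+1)).mul (continuous_apply n).inv)
  have hcomm : ∀ y, hat (S y) = S (hat y) := by
    intro y; funext n; rw [hS, hhat, hhat, hS, hS]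
  refine ⟨⟨hcont, hcomm, ?_⟩, ?_⟩
  · apply Set.Subset.antisymm
    · rintro _ ⟨y, hy, rfl⟩ a L
      have he : (fun j : Fin L => hat y (a + (j : ℕ)))
          = diffMap L (fun j : Fin (L+1) => y (a + (j : ℕ))) := by
        funext j
        rw [hhat]
        simp only [diffMap, Fin.val_succ, Fin.coe_castSucc, Nat.cast_add, Nat.cast_one]
        rw [add_assoc]
      rw [he]
      have h1 := image_closure_subset_closure_image (continuous_diffMap (G := G) L)
        (s := wordsIn x (L+1)) ⟨_, hy a (L+1), rfl⟩
      rw [← wordsIn_diff hxhat L] at h1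
      exact h1
    · intro z hz
      have key : ∀ N : ℕ, ∃ v : Fin (2*N+1+1) → G, v ∈ closure (wordsIn x (2*N+1+1)) ∧
          diffMap (2*N+1) v = fun j : Fin (2*N+1) => z (-(N : ℤ) + (j : ℕ)) := by
        intro N
        obtain ⟨v, hv, he⟩ := closure_wordsIn_diff hxhat (2*N+1) (hz (-(N : ℤ)) (2*N+1))
        exact ⟨v, hv, he⟩
      choose v hv hve using key
      set yseq : ℕ → ℤ → G := fun N n =>
        if h : 0 ≤ n + (N : ℤ) ∧ n + (N : ℤ) < 2*(N : ℤ)+2 then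
          v N ⟨(n + (N : ℤ)).toNat, by omega⟩ else 1 with hyseq
      obtain ⟨y, -, φ, hφ, hlim⟩ := IsCompact.tendsto_subseq isCompact_univ
        (fun N => Set.mem_univ (yseq N))
      have facta : ∀ (n : ℤ) (N : ℕ), n.natAbs + 1 ≤ N → hat (yseq N) n = z n := by
        intro n N hN
        have c0 : 0 ≤ n + (N : ℤ) ∧ n + (N : ℤ) < 2*(N : ℤ)+2 := by omega
        have c1 : 0 ≤ (n+1) + (N : ℤ) ∧ (n+1) + (N : ℤ) < 2*(N : ℤ)+2 := by omega
        have hj0 : (n + (N : ℤ)).toNat < 2*N+1 := by omega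
        have hdm := congrFun (hve N) ⟨(n + (N : ℤ)).toNat, hj0⟩
        simp only [diffMap] at hdm
        rw [hhat]
        simp only [hyseq]
        rw [dif_pos c1, dif_pos c0]
        have e1 : (⟨((n+1) + (N : ℤ)).toNat, by omega⟩ : Fin (2*N+1+1))
            = (⟨(n + (N : ℤ)).toNat, hj0⟩ : Fin (2*N+1)).succ := by
          apply Fin.ext
          show ((n+1) + (N : ℤ)).toNat = (n + (N : ℤ)).toNat + 1
          omega
        have e0 : (⟨(n + (N : ℤ)).toNat, by omega⟩ : Fin (2*N+1+1))
            = (⟨(n + (N : ℤ)).toNat, hj0⟩ : Fin (2*N+1)).castSucc := by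
          apply Fin.ext; rfl
        rw [e1, e0, hdm]
        congr 1
        show -(N : ℤ) + ((n + (N : ℤ)).toNat : ℤ) = n
        omega
      have hy : y ∈ subshiftOf x := by
        intro a L
        have hc : Continuous (fun w : ℤ → G => (fun j : Fin L => w (a + (j : ℕ)))) :=
          continuous_pi fun j => continuous_apply _
        have hrest : Tendsto (fun k => (fun j : Fin L => yseq (φ k) (a + (j : ℕ)))) atTop
            (nhds (fun j : Fin L => y (a + (j : ℕ)))) := (hc.tendsto y).comp hlim
        apply isClosed_closure.mem_of_tendsto hrest
        filter_upwards [eventually_ge_atTop (a.natAbs + L + 1)] with k hk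
        have hN : a.natAbs + L + 1 ≤ φ k := le_trans hk hφ.le_apply
        set N := φ k with hNdef
        have hb2 : (a + (N : ℤ)).toNat + L ≤ 2*N+1+1 := by omega
        have heq : (fun j : Fin L => yseq N (a + (j : ℕ)))
            = restrMap (a + (N : ℤ)).toNat L (2*N+1+1) hb2 (v N) := by
          funext j
          have hjL := j.isLt
          have cj : 0 ≤ (a + (j : ℕ)) + (N : ℤ) ∧ (a + (j : ℕ)) + (N : ℤ) < 2*(N : ℤ)+2 := by
            omega
          simp only [hyseq]
          rw [dif_pos cj, restrMap]
          congr 1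
          apply Fin.ext
          show ((a + (j : ℕ)) + (N : ℤ)).toNat = (a + (N : ℤ)).toNat + (j : ℕ)
          omega
        rw [heq]
        exact restrMap_mem_closure hb2 (hv N)
      refine ⟨y, hy, ?_⟩
      funext n
      have h1 : Tendsto (fun k => hat (yseq (φ k)) n) atTop (nhds (hat y n)) :=
        (((continuous_apply n).comp hcont).tendsto y).comp hlim
      have h2 : ∀ᶠ k in atTop, hat (yseq (φ k)) n = z n := by
        filter_upwards [eventually_ge_atTop (n.natAbs + 1)] with k hk
        exact facta n (φ k) (le_trans hk hφ.le_apply)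
      exact tendsto_nhds_unique (h1.congr' h2) tendsto_const_nhds
  · intro n
    have ht : n + 1 < morseLen lam (n+2) := by
      have h1 : n + 1 < 2 ^ (n+2) := by
        have := Nat.lt_two_pow_self (n := n+1)
        have : (2:ℕ) ^ (n+1) ≤ 2 ^ (n+2) := Nat.pow_le_pow_right (by norm_num) (by omega)
        omega
      exact lt_of_lt_of_le h1 (two_pow_le_morseLen lam hlam (n+2))
    refine ⟨morseLen lam (n+2), morseLen_pos lam hlam (n+2), fun j => ?_⟩
    rw [xhat_of_mod lam b hlam hb0 x xhat hx hxhat (n+2) n ht (n + j * morseLen lam (n+2))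
        (by rw [Nat.add_mul_mod_self_right]; exact Nat.mod_eq_of_lt (by omega)),
      xhat_of_mod lam b hlam hb0 x xhat hx hxhat (n+2) n ht n (Nat.mod_eq_of_lt (by omega))]
end

section
/- Let θ: A → A^λ be a bijective substitution of constant length λ ≥ 2 on a finite alphabet A, with column maps σ_i(a) := θ(a)[i] bijections of A and σ_0 = id_A. Let G ≤ Sym(A) be the subgroup generated by σ_0, σ_1, …, σ_{λ-1}, and define θ̄: G → G^λ by θ̄(τ) = (σ_0∘τ, σ_1∘τ, …, σ_{λ-1}∘τ). Then θ̄ is a primitive substitution of constant length λ on the finite alphabet G: there exists n ≥ 1 such that for all τ, τ' ∈ G there is an index k with θ̄^n(τ)[k] = τ'. -/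
/-!
Write `θ̄(τ)[i] = σ_i τ`. Since the cover acts by left multiplication, `θ̄ⁿ(τ)` is `θ̄ⁿ(1)` with
every letter multiplied on the right by `τ`, so it suffices to reach `τ' τ⁻¹` inside `θ̄ⁿ(1)`.
The letters of `θ̄ⁿ(1)` for all `n` form a submonoid: concatenating the `k₁`-th position of
level `n` with the `k₂`-th position of level `m` multiplies the letters, and `σ_0 = 1` makes the
levels increase. This submonoid contains the generators, hence, the group being finite, the whole
generated group; finiteness also makes a single level `n` suffice for all elements.
-/

/-- The `n`-th iterate of a substitution of constant length `l`:
`substIter l θ n a k` is the `k`-th letter of the word `θⁿ(a)` (of length `lⁿ`);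
the substitution `θ : A → ℕ → A` sends a letter to a word of length `l`
(modelled as a function on `ℕ`, only the values at indices `< l` being relevant). -/
def substIter {A : Type*} (l : ℕ) (θ : A → ℕ → A) : ℕ → A → ℕ → A
  | 0, a, _ => a
  | n + 1, a, k => θ (substIter l θ n a (k / l)) (k % l)

open Filter

section GroupCover

variable {M : Type*} [Monoid M] (l : ℕ) (σ : ℕ → M)

theorem substIter_mul_right (n k : ℕ) (τ : M) :
    substIter l (fun τ i => σ i * τ) n τ k = substIter l (fun τ i => σ i * τ) n 1 k * τ := by
  induction n generalizing k with
  | zero => simp [substIter]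
  | succ n ih => simp only [substIter, ih, mul_assoc]

theorem substIter_add_mul_pow_one {n : ℕ} (m : ℕ) {k₁ : ℕ} (k₂ : ℕ) (hk₁ : k₁ < l ^ n) :
    substIter l (fun τ i => σ i * τ) (n + m) 1 (k₁ + l ^ n * k₂) =
      substIter l (fun τ i => σ i * τ) n 1 k₁ * substIter l (fun τ i => σ i * τ) m 1 k₂ := by
  induction n generalizing k₁ with
  | zero =>
    obtain rfl : k₁ = 0 := by simpa using hk₁
    simp [substIter]
  | succ n ih =>
    have hl : 0 < l := Nat.pos_of_ne_zero fun h => by simp [h] at hk₁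
    rw [Nat.succ_add, pow_succ', mul_assoc]
    simp only [substIter, Nat.add_mul_mod_self_left, Nat.add_mul_div_left _ _ hl]
    rw [ih (Nat.div_lt_of_lt_mul (pow_succ' l n ▸ hk₁)), mul_assoc]

def coverLetters (n : ℕ) : Set M :=
  {g | ∃ k < l ^ n, substIter l (fun τ i => σ i * τ) n 1 k = g}

theorem one_mem_coverLetters_zero : (1 : M) ∈ coverLetters l σ 0 :=
  ⟨0, by simp, rfl⟩

theorem mem_coverLetters_one {i : ℕ} (hi : i < l) : σ i ∈ coverLetters l σ 1 :=
  ⟨i, by simpa using hi, by simp [substIter, Nat.mod_eq_of_lt hi]⟩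

theorem mul_mem_coverLetters_add {n m : ℕ} {g h : M} (hg : g ∈ coverLetters l σ n)
    (hh : h ∈ coverLetters l σ m) : g * h ∈ coverLetters l σ (n + m) := by
  obtain ⟨k₁, hk₁, rfl⟩ := hg
  obtain ⟨k₂, hk₂, rfl⟩ := hh
  refine ⟨k₁ + l ^ n * k₂, ?_, substIter_add_mul_pow_one l σ m k₂ hk₁⟩
  calc k₁ + l ^ n * k₂ < l ^ n * (k₂ + 1) := by linarith
    _ ≤ l ^ n * l ^ m := Nat.mul_le_mul_left _ hk₂
    _ = l ^ (n + m) := (pow_add l n m).symm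

variable {l σ}

theorem coverLetters_mono (hl : 0 < l) (hσ0 : σ 0 = 1) : Monotone (coverLetters l σ) := by
  refine monotone_nat_of_le_succ fun n g hg => ?_
  simpa [hσ0, add_comm] using mul_mem_coverLetters_add l σ (mem_coverLetters_one l σ hl) hg

theorem exists_mem_coverLetters_of_mem_closure {g : M}
    (hg : g ∈ Submonoid.closure (σ '' Set.Iio l)) : ∃ n, g ∈ coverLetters l σ n := by
  induction hg using Submonoid.closure_induction with
  | mem x hx =>
    obtain ⟨i, hi, rfl⟩ := hx
    exact ⟨1, mem_coverLetters_one l σ hi⟩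
  | one => exact ⟨0, one_mem_coverLetters_zero l σ⟩
  | mul x y _ _ hx hy =>
    obtain ⟨n, hn⟩ := hx
    obtain ⟨m, hm⟩ := hy
    exact ⟨n + m, mul_mem_coverLetters_add l σ hn hm⟩

end GroupCover

theorem eventually_closure_subset_coverLetters {G : Type*} [Group G] [Finite G] {l : ℕ}
    {σ : ℕ → G} (hl : 0 < l) (hσ0 : σ 0 = 1) :
    ∀ᶠ n in atTop, ∀ g ∈ Subgroup.closure (σ '' Set.Iio l), g ∈ coverLetters l σ n := by
  refine eventually_all.2 fun g => eventually_imp_distrib_left.2 fun hg => ?_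
  rw [← SetLike.mem_coe, ← Subgroup.coe_toSubmonoid,
    Subgroup.closure_toSubmonoid_of_finite] at hg
  obtain ⟨n, hn⟩ := exists_mem_coverLetters_of_mem_closure hg
  exact eventually_atTop.2 ⟨n, fun m hm => coverLetters_mono hl hσ0 hm hn⟩

theorem stmt_6_general {A : Type*} [Fintype A]
    (l : ℕ) (hl : 2 ≤ l)
    (σ : ℕ → Equiv.Perm A) (hσ0 : σ 0 = 1) :
    ∃ n : ℕ, 1 ≤ n ∧
      ∀ τ τ' : Equiv.Perm A,
        τ ∈ Subgroup.closure (σ '' Set.Iio l) → τ' ∈ Subgroup.closure (σ '' Set.Iio l) →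
        ∃ k : ℕ, k < l ^ n ∧
          substIter l (fun (τ : Equiv.Perm A) (i : ℕ) => σ i * τ) n τ k = τ' := by
  obtain ⟨n, hn, hcover⟩ := ((eventually_ge_atTop 1).and
    (eventually_closure_subset_coverLetters (by omega : 0 < l) hσ0)).exists
  refine ⟨n, hn, fun τ τ' hτ hτ' => ?_⟩
  obtain ⟨k, hk, hkτ⟩ := hcover _ (mul_mem hτ' (inv_mem hτ))
  exact ⟨k, hk, by rw [substIter_mul_right, hkτ, inv_mul_cancel_right]⟩

/-- **The group cover of a bijective substitution is a primitive substitution.**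
Let `θ : A → A^l` be a bijective substitution of constant length `l ≥ 2` with column
permutations `σ_i` (`θ(a)[i] = σ_i a`), `σ_0 = id`, which is primitive.  Let
`G ≤ Sym(A)` be the subgroup generated by `σ_0, …, σ_{l-1}` and let
`θ̄(τ) = (σ_0 ∘ τ, …, σ_{l-1} ∘ τ)` be the group cover substitution on the (finite)
alphabet `G`.  Then `θ̄` is primitive: there is `n ≥ 1` such that for all `τ, τ' ∈ G`
some letter of `θ̄ⁿ(τ)` equals `τ'`. -/
theorem stmt_6 {A : Type*} [Fintype A] [DecidableEq A]
    (l : ℕ) (hl : 2 ≤ l)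
    (σ : ℕ → Equiv.Perm A) (hσ0 : σ 0 = 1)
    (hprim : ∃ n : ℕ, 1 ≤ n ∧ ∀ a a' : A, ∃ k : ℕ, k < l ^ n ∧
      substIter l (fun a i => σ i a) n a k = a') :
    ∃ n : ℕ, 1 ≤ n ∧
      ∀ τ τ' : Equiv.Perm A,
        τ ∈ Subgroup.closure (σ '' Set.Iio l) → τ' ∈ Subgroup.closure (σ '' Set.Iio l) →
        ∃ k : ℕ, k < l ^ n ∧
          substIter l (fun (τ : Equiv.Perm A) (i : ℕ) => σ i * τ) n τ k = τ' :=
  stmt_6_general l hl σ hσ0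
end

section
/- Let θ: A → A^λ be a primitive bijective substitution of constant length λ ≥ 2 on a finite alphabet A with θ(a₀)[0] = a₀ and σ_0 = id_A, and let θ̄: G → G^λ, θ̄(τ) = (σ_0∘τ, …, σ_{λ-1}∘τ), be its group cover substitution on the subgroup G ≤ Sym(A) generated by the column maps (θ̄ has fixed letter id_A). Then the map F: X(θ̄) → A^ℤ defined by F(y)[n] = (y[n])(a₀) is continuous, satisfies F ∘ S = S ∘ F, and F(X(θ̄)) = X(θ). Hence (S, X(θ)) is a topological factor of (S, X(θ̄)). -/
/-- The fixed point `x_θ` of the substitution `θ` starting with the letter `a₀`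
(when `l ≥ 2` and `θ(a₀)[0] = a₀`, this is the coordinatewise limit of `θⁿ(a₀)`). -/
def substFix {A : Type*} (l : ℕ) (θ : A → ℕ → A) (a₀ : A) : ℕ → A :=
  fun n => substIter l θ (n + 1) a₀ n

/-- The subshift of all two-sided sequences all of whose finite subwords occur in `u`. -/
def subshiftF {A : Type*} (u : ℕ → A) : Set (ℤ → A) :=
  {y | ∀ (a : ℤ) (L : ℕ), ∃ k : ℕ, ∀ j : ℕ, j < L → y (a + (j : ℤ)) = u (k + j)}

/-- The left shift on two-sided sequences. -/
def shiftMap {A : Type*} : (ℤ → A) → (ℤ → A) := fun y n => y (n + 1)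

/-! A point of `X(θ)` is lifted to `X(θ̄)` by compactness: each window of it is the image of a
window of the fixed point of `θ̄`, because evaluation at `a₀` maps the fixed point of `θ̄` onto
that of `θ`, and a limit point of these finite lifts is a two-sided lift. -/

section LetterToLetter

variable {A B : Type*}

theorem map_substIter {l : ℕ} {θ : A → ℕ → A} {θ' : B → ℕ → B} {φ : B → A}
    (hφ : ∀ b i, φ (θ' b i) = θ (φ b) i) (n : ℕ) (b : B) (k : ℕ) :
    φ (substIter l θ' n b k) = substIter l θ n (φ b) k := by
  induction n generalizing k with
  | zero => rfl
  | succ n ih => simp only [substIter, hφ, ih]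

theorem comp_substFix {l : ℕ} {θ : A → ℕ → A} {θ' : B → ℕ → B} {φ : B → A}
    (hφ : ∀ b i, φ (θ' b i) = θ (φ b) i) (b₀ : B) :
    φ ∘ substFix l θ' b₀ = substFix l θ (φ b₀) :=
  funext fun n => map_substIter hφ (n + 1) b₀ n

theorem exists_frequently_eqOn_finset [Finite B] {ι : Type*} (f : ℕ → ι → B) :
    ∃ y : ι → B, ∀ s : Finset ι, ∃ᶠ m in Filter.atTop, ∀ n ∈ s, f m n = y n := by
  let _ : TopologicalSpace B := ⊥
  have : DiscreteTopology B := ⟨rfl⟩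
  obtain ⟨y, -, hy⟩ := isCompact_univ.exists_mapClusterPt (f := Filter.atTop) (u := f)
    (by simp)
  refine ⟨y, fun s => ?_⟩
  have hs : (s : Set ι).pi (fun n => {y n}) ∈ nhds y :=
    set_pi_mem_nhds s.finite_toSet fun n _ => mem_nhds_discrete.mpr rfl
  simpa using mapClusterPt_iff_frequently.mp hy _ hs

theorem image_comp_subshiftF [Finite B] (φ : B → A) (u : ℕ → B) :
    (φ ∘ ·) '' subshiftF u = subshiftF (φ ∘ u) := by
  refine subset_antisymm ?_ fun x hx => ?_
  · rintro _ ⟨y, hy, rfl⟩ a L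
    obtain ⟨k, hk⟩ := hy a L
    exact ⟨k, fun j hj => congrArg φ (hk j hj)⟩
  choose k hk using fun m : ℕ => hx (-m) (2 * m + 1)
  obtain ⟨y, hy⟩ := exists_frequently_eqOn_finset fun m (n : ℤ) => u (k m + (n + m).toNat)
  have agree (s : Finset ℤ) (M : ℕ) : ∃ m ≥ M, ∀ n ∈ s, u (k m + (n + m).toNat) = y n :=
    ((hy s).and_eventually (Filter.eventually_ge_atTop M)).exists.imp fun _ h => ⟨h.2, h.1⟩
  refine ⟨y, fun a L => ?_, funext fun n => ?_⟩
  · obtain ⟨m, hm, hm_agree⟩ :=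
      agree ((Finset.range L).image fun j : ℕ => a + j) (a.natAbs + L)
    refine ⟨k m + (a + m).toNat, fun j hj => ?_⟩
    rw [← hm_agree _ (Finset.mem_image_of_mem _ (Finset.mem_range.mpr hj))]
    congr 1
    omega
  · obtain ⟨m, hm, hm_agree⟩ := agree {n} n.natAbs
    have hwindow := hk m (n + m).toNat (by omega)
    rw [show -(m : ℤ) + (n + m).toNat = n by omega] at hwindow
    show φ (y n) = x n
    rw [← hm_agree n (Finset.mem_singleton_self n), hwindow]
    rfl

end LetterToLetter

theorem stmt_7_general {A : Type*} [Fintype A]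
    [TopologicalSpace A]
    [TopologicalSpace (Equiv.Perm A)] [DiscreteTopology (Equiv.Perm A)]
    (l : ℕ)
    (σ : ℕ → Equiv.Perm A)
    (a₀ : A)
    (F : (ℤ → Equiv.Perm A) → (ℤ → A)) (hF : ∀ y n, F y n = (y n) a₀) :
    Continuous F ∧ (∀ y, F (shiftMap y) = shiftMap (F y)) ∧
      F '' subshiftF (substFix l (fun (τ : Equiv.Perm A) (i : ℕ) => σ i * τ) 1)
        = subshiftF (substFix l (fun a i => σ i a) a₀) := by
  obtain rfl : F = fun y => (· a₀) ∘ y := funext fun y => funext (hF y)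
  have hevalContinuous : Continuous fun τ : Equiv.Perm A => τ a₀ := continuous_of_discreteTopology
  refine ⟨continuous_pi fun n => hevalContinuous.comp (continuous_apply n), fun y => rfl, ?_⟩
  rw [image_comp_subshiftF,
    comp_substFix (θ := fun a i => σ i a) (fun τ i => Equiv.Perm.mul_apply (σ i) τ a₀)]
  rfl

/-- **A bijective substitution system is a topological factor of its group cover.**
Let `θ` be a primitive bijective substitution of constant length `l ≥ 2` with columns
`σ_i`, `σ_0 = id`, and fixed letter `a₀` (`θ(a₀)[0] = a₀`), and let
`θ̄(τ) = (σ_0 ∘ τ, …, σ_{l-1} ∘ τ)` be its group cover substitution (with fixed letter `id`).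
Then `F(y)[n] = (y[n])(a₀)` is continuous, commutes with the shift, and maps `X(θ̄)`
onto `X(θ)`. -/
theorem stmt_7 {A : Type*} [Fintype A] [DecidableEq A]
    [TopologicalSpace A] [DiscreteTopology A]
    [TopologicalSpace (Equiv.Perm A)] [DiscreteTopology (Equiv.Perm A)]
    (l : ℕ) (hl : 2 ≤ l)
    (σ : ℕ → Equiv.Perm A) (hσ0 : σ 0 = 1)
    (a₀ : A) (hfix : σ 0 a₀ = a₀)
    (hprim : ∃ n : ℕ, 1 ≤ n ∧ ∀ a a' : A, ∃ k : ℕ, k < l ^ n ∧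
      substIter l (fun a i => σ i a) n a k = a')
    (F : (ℤ → Equiv.Perm A) → (ℤ → A)) (hF : ∀ y n, F y n = (y n) a₀) :
    Continuous F ∧ (∀ y, F (shiftMap y) = shiftMap (F y)) ∧
      F '' subshiftF (substFix l (fun (τ : Equiv.Perm A) (i : ℕ) => σ i * τ) 1)
        = subshiftF (substFix l (fun a i => σ i a) a₀) :=
  stmt_7_general l σ a₀ F hF
end

section
/- Let T be an ergodic invertible measure-preserving transformation of a standard Borel probability space (X, B, μ) with discrete spectrum, let G be a finite group with |G| = m, and let ψ: X → G be measurable with T_ψ ergodic. Let r ≥ 2 be an integer such that (T_ψ)^r is ergodic and gcd(r, m) = 1. Then C(T_ψ) = C((T_ψ)^r). -/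
open MeasureTheory

set_option linter.unusedSectionVars false
set_option linter.unusedVariables false
set_option maxHeartbeats 1000000

/-- The centralizer of a measure-preserving transformation `R`: all measure-preserving
maps, invertible modulo null sets, commuting with `R` modulo null sets. -/
def Centralizer {α : Type*} [MeasurableSpace α] (R : α → α) (m : Measure α) :
    Set (α → α) :=
  {S | MeasurePreserving S m m ∧ QuasiInvertible S m ∧ S ∘ R =ᵐ[m] R ∘ S}

section StepOne
variable {X : Type*} [MeasurableSpace X] [StandardBorelSpace X]
  {G : Type*} [Group G] [Fintype G] [MeasurableSpace G] [MeasurableSingletonClass G]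
  {T : X → X} {ψ : X → G} {S : X × G → X × G}

private lemma skew_fst_iterate (hS : ∀ p, S p = (T p.1, ψ p.1 * p.2)) (k : ℕ) (p : X × G) :
    ((S^[k]) p).1 = T^[k] p.1 := by
  induction k generalizing p with
  | zero => rfl
  | succ n ih =>
    rw [Function.iterate_succ_apply', Function.iterate_succ_apply', hS, ih]

private lemma skew_snd_iterate (hS : ∀ p, S p = (T p.1, ψ p.1 * p.2)) (k : ℕ) (p : X × G) :
    ((S^[k]) p).2 = ((S^[k]) (p.1, 1)).2 * p.2 := by
  induction k generalizing p with
  | zero => simp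
  | succ n ih =>
    rw [Function.iterate_succ_apply', Function.iterate_succ_apply', hS, hS]
    simp only [skew_fst_iterate hS]
    rw [ih p, ih (p.1, 1)]
    simp [mul_assoc]

private lemma skew_psi_succ (hS : ∀ p, S p = (T p.1, ψ p.1 * p.2)) (k : ℕ) (x : X) :
    ((S^[k+1]) (x, 1)).2 = ((S^[k]) (T x, 1)).2 * ψ x := by
  rw [Function.iterate_succ_apply, hS]
  simp only []
  rw [skew_snd_iterate hS k (T x, ψ x * 1)]
  simp

private lemma skew_psi_succ' (hS : ∀ p, S p = (T p.1, ψ p.1 * p.2)) (k : ℕ) (x : X) :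
    ((S^[k+1]) (x, 1)).2 = ψ (T^[k] x) * ((S^[k]) (x, 1)).2 := by
  rw [Function.iterate_succ_apply', hS]
  simp only [skew_fst_iterate hS]


private lemma fst_mp' (μ : Measure X) [IsProbabilityMeasure μ] (mG : Measure G)
    [IsProbabilityMeasure mG] :
    MeasurePreserving Prod.fst (μ.prod mG) μ := by
  refine ⟨measurable_fst, ?_⟩
  rw [Measure.map_fst_prod]
  simp

private lemma step_one
    (μ : Measure X) [IsProbabilityMeasure μ]
    {T : X → X} (hT : Ergodic T μ) (hds : HasDiscreteSpectrum T μ)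
    {ψ : X → G} (mG : Measure G) [IsProbabilityMeasure mG]
    {S : X × G → X × G} (hS : ∀ p, S p = (T p.1, ψ p.1 * p.2))
    (hSmp : MeasurePreserving S (μ.prod mG) (μ.prod mG))
    {r : ℕ} (hTψr : Ergodic (S^[r]) (μ.prod mG))
    {U : X × G → X × G} (hU : MeasurePreserving U (μ.prod mG) (μ.prod mG))
    (hUr : U ∘ (S^[r]) =ᵐ[μ.prod mG] (S^[r]) ∘ U) :
    (fun p => (U (S p)).1) =ᵐ[μ.prod mG] fun p => T ((U p).1) := by
  have hfst : MeasurePreserving Prod.fst (μ.prod mG) μ := fst_mp' μ mG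
  have hA : MeasurePreserving (fun p => U (S p)) (μ.prod mG) (μ.prod mG) := hU.comp hSmp
  have hAX : MeasurePreserving (fun p => (U (S p)).1) (μ.prod mG) μ := hfst.comp hA
  have hUX : MeasurePreserving (fun p => (U p).1) (μ.prod mG) μ := hfst.comp hU
  have hBX : MeasurePreserving (fun p => T ((U p).1)) (μ.prod mG) μ :=
    hT.toMeasurePreserving.comp hUX
  -- The span of eigenfunctions behaves well under both maps
  have main : ∀ f ∈ Submodule.span ℂ
      {f : X → ℂ | MemLp f 2 μ ∧ ∃ c : ℂ, f ∘ T =ᵐ[μ] fun x => c * f x},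
      MemLp f 2 μ ∧
        (fun p => f ((U (S p)).1)) =ᵐ[μ.prod mG] fun p => f (T ((U p).1)) := by
    intro f hf
    induction hf using Submodule.span_induction with
    | zero => exact ⟨MemLp.zero, Filter.EventuallyEq.rfl⟩
    | add f g hfm hgm ihf ihg =>
      refine ⟨ihf.1.add ihg.1, ?_⟩
      filter_upwards [ihf.2, ihg.2] with p h1 h2
      simp only [Pi.add_apply, h1, h2]
    | smul a f hfm ihf =>
      refine ⟨ihf.1.const_smul a, ?_⟩
      filter_upwards [ihf.2] with p h1
      simp only [Pi.smul_apply, smul_eq_mul, h1]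
    | mem f hmem =>
      obtain ⟨hf2, c, hfT⟩ := hmem
      refine ⟨hf2, ?_⟩
      by_cases hf0 : f =ᵐ[μ] 0
      · have e1 : (fun p => f ((U (S p)).1)) =ᵐ[μ.prod mG] (fun p => (0:ℂ)) :=
          hAX.quasiMeasurePreserving.ae_eq_comp hf0
        have e2 : (fun p => f (T ((U p).1))) =ᵐ[μ.prod mG] (fun p => (0:ℂ)) :=
          hBX.quasiMeasurePreserving.ae_eq_comp hf0
        exact e1.trans e2.symm
      · -- |c| = 1 and f ≠ 0 a.e.
        have hNf : eLpNorm f 2 μ ≠ 0 := by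
          rw [Ne, eLpNorm_eq_zero_iff hf2.aestronglyMeasurable (by norm_num : (2:ENNReal) ≠ 0)]
          exact hf0
        have h1 : eLpNorm (f ∘ T) 2 μ = eLpNorm f 2 μ :=
          eLpNorm_comp_measurePreserving hf2.aestronglyMeasurable hT.toMeasurePreserving
        have h2 : eLpNorm (f ∘ T) 2 μ = (‖c‖₊ : ENNReal) * eLpNorm f 2 μ := by
          rw [eLpNorm_congr_ae hfT]
          have : (fun x => c * f x) = c • f := by funext x; simp [smul_eq_mul]
          rw [this, eLpNorm_const_smul, enorm_eq_nnnorm]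
        have hc1 : (‖c‖₊ : ENNReal) = 1 := by
          have h3 : (‖c‖₊ : ENNReal) * eLpNorm f 2 μ = 1 * eLpNorm f 2 μ := by
            rw [← h2, h1, one_mul]
          exact (ENNReal.mul_left_inj hNf hf2.eLpNorm_ne_top).mp h3
        have hcnorm : ‖c‖ = 1 := by
          have := congrArg ENNReal.toReal hc1
          simpa using this
        have hcne : c ≠ 0 := by
          intro h; rw [h, norm_zero] at hcnorm; norm_num at hcnorm
        have hmodinv : (fun x => ‖f x‖) ∘ T =ᵐ[μ] fun x => ‖f x‖ := by
          filter_upwards [hfT] with x hx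
          show ‖f (T x)‖ = ‖f x‖
          have : f (T x) = c * f x := hx
          rw [this, norm_mul, hcnorm, one_mul]
        obtain ⟨k, hk⟩ := hT.ae_eq_const_of_ae_eq_comp_ae
          hf2.aestronglyMeasurable.norm hmodinv
        have hkne : k ≠ 0 := by
          rintro rfl
          apply hf0
          filter_upwards [hk] with x hx
          simpa using hx
        -- the lifted eigenfunction
        have hF0S : (fun p : X × G => f ((S p).1)) =ᵐ[μ.prod mG]
            fun p => c * f p.1 := by
          have := hfst.quasiMeasurePreserving.ae_eq_comp hfT
          filter_upwards [this] with p hp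
          rw [hS]
          exact hp
        have hF0Sr : ∀ k : ℕ, (fun p : X × G => f (((S^[k]) p).1)) =ᵐ[μ.prod mG]
            fun p => c^k * f p.1 := by
          intro k
          induction k with
          | zero =>
            simp only [Function.iterate_zero, id_eq, pow_zero, one_mul]
            exact Filter.EventuallyEq.rfl
          | succ n ih =>
            have e1 : (fun p : X × G => f (((S^[n]) (S p)).1)) =ᵐ[μ.prod mG]
                fun p => c^n * f ((S p).1) :=
              hSmp.quasiMeasurePreserving.ae_eq_comp ih
            have e2 : (fun p : X × G => c^n * f ((S p).1)) =ᵐ[μ.prod mG]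
                fun p => c^(n+1) * f p.1 := by
              filter_upwards [hF0S] with p hp
              rw [hp, pow_succ]
              ring
            have e3 : (fun p : X × G => f (((S^[n+1]) p).1))
                = fun p : X × G => f (((S^[n]) (S p)).1) := by
              funext p; rw [Function.iterate_succ_apply]
            rw [e3]
            exact e1.trans e2
        have hFU : (fun p => f ((U ((S^[r]) p)).1)) =ᵐ[μ.prod mG]
            fun p => c^r * f ((U p).1) := by
          have e1 : (fun p => f ((U ((S^[r]) p)).1)) =ᵐ[μ.prod mG]
              fun p => f (((S^[r]) (U p)).1) := by
            filter_upwards [hUr] with p hp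
            show f ((U ((S^[r]) p)).1) = _
            rw [show U ((S^[r]) p) = (S^[r]) (U p) from hp]
          have e2 : (fun p => f (((S^[r]) (U p)).1)) =ᵐ[μ.prod mG]
              fun p => c^r * f ((U p).1) :=
            hU.quasiMeasurePreserving.ae_eq_comp (hF0Sr r)
          exact e1.trans e2
        -- quotient is S^r-invariant hence constant
        have hQ : (fun p => f ((U p).1) * (f p.1)⁻¹) ∘ (S^[r]) =ᵐ[μ.prod mG]
            (fun p => f ((U p).1) * (f p.1)⁻¹) := by
          filter_upwards [hFU, hF0Sr r] with p e1 e2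
          show f ((U ((S^[r]) p)).1) * (f (((S^[r]) p).1))⁻¹ = _
          have hcr : c^r ≠ 0 := pow_ne_zero r hcne
          rw [e1, e2, mul_inv, show c ^ r * f ((U p).1) * ((c ^ r)⁻¹ * (f p.1)⁻¹)
              = (c ^ r * (c ^ r)⁻¹) * (f ((U p).1) * (f p.1)⁻¹) by ring,
            mul_inv_cancel₀ hcr, one_mul]
        have hfm : AEMeasurable f μ := hf2.aestronglyMeasurable.aemeasurable
        have hQm : AEStronglyMeasurable (fun p => f ((U p).1) * (f p.1)⁻¹) (μ.prod mG) := by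
          have m1 : AEMeasurable (fun p : X × G => f ((U p).1)) (μ.prod mG) :=
            hfm.comp_quasiMeasurePreserving hUX.quasiMeasurePreserving
          have m2 : AEMeasurable (fun p : X × G => f p.1) (μ.prod mG) :=
            hfm.comp_quasiMeasurePreserving hfst.quasiMeasurePreserving
          exact (m1.mul m2.inv).aestronglyMeasurable
        obtain ⟨q, hq⟩ := hTψr.ae_eq_const_of_ae_eq_comp_ae hQm hQ
        have hfneP : ∀ᵐ p ∂(μ.prod mG), f p.1 ≠ 0 := by
          have := hfst.quasiMeasurePreserving.ae_eq_comp hk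
          filter_upwards [this] with p hp h0
          apply hkne
          have : ‖f p.1‖ = k := hp
          rw [h0, norm_zero] at this
          exact this.symm
        have hFU0 : (fun p => f ((U p).1)) =ᵐ[μ.prod mG] fun p => q * f p.1 := by
          filter_upwards [hq, hfneP] with p h1 h2
          have : f ((U p).1) * (f p.1)⁻¹ = q := h1
          rw [← this, mul_assoc, inv_mul_cancel₀ h2, mul_one]
        -- conclude
        have lhs : (fun p => f ((U (S p)).1)) =ᵐ[μ.prod mG]
            fun p => q * (c * f p.1) := by
          have e1 : (fun p => f ((U (S p)).1)) =ᵐ[μ.prod mG]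
              fun p => q * f ((S p).1) :=
            hSmp.quasiMeasurePreserving.ae_eq_comp hFU0
          have e2 : (fun p => q * f ((S p).1)) =ᵐ[μ.prod mG]
              fun p => q * (c * f p.1) := by
            filter_upwards [hF0S] with p hp; rw [hp]
          exact e1.trans e2
        have rhs : (fun p => f (T ((U p).1))) =ᵐ[μ.prod mG]
            fun p => q * (c * f p.1) := by
          have e1 : (fun p => f (T ((U p).1))) =ᵐ[μ.prod mG]
              fun p => c * f ((U p).1) :=
            hUX.quasiMeasurePreserving.ae_eq_comp hfT
          have e2 : (fun p => c * f ((U p).1)) =ᵐ[μ.prod mG]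
              fun p => q * (c * f p.1) := by
            filter_upwards [hFU0] with p hp; rw [hp]; ring
          exact e1.trans e2
        exact lhs.trans rhs.symm
  -- bounded injective measurable embedding into ℂ
  obtain ⟨ι₀, hι₀⟩ := exists_measurableEmbedding_real (α := X)
  set ι : X → ℂ := fun x => ((Real.arctan (ι₀ x) : ℝ) : ℂ) with hιdef
  have hιmeas : Measurable ι :=
    Complex.measurable_ofReal.comp (Real.measurable_arctan.comp hι₀.measurable)
  have hιinj : Function.Injective ι := by
    intro a b h
    exact hι₀.injective (Real.arctan_injective (Complex.ofReal_inj.mp h))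
  have hι2 : MemLp ι 2 μ := by
    refine MemLp.of_bound hιmeas.aestronglyMeasurable (Real.pi / 2) (Filter.Eventually.of_forall fun x => ?_)
    rw [hιdef]
    simp only [Complex.norm_real]
    rw [Real.norm_eq_abs, abs_le]
    constructor
    · linarith [Real.neg_pi_div_two_lt_arctan (ι₀ x)]
    · linarith [Real.arctan_lt_pi_div_two (ι₀ x)]
  -- the L² difference is zero
  have hasmA : AEStronglyMeasurable (fun p : X × G => ι ((U (S p)).1)) (μ.prod mG) :=
    (hιmeas.comp hAX.measurable).aestronglyMeasurable
  have hasmB : AEStronglyMeasurable (fun p : X × G => ι (T ((U p).1))) (μ.prod mG) :=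
    (hιmeas.comp hBX.measurable).aestronglyMeasurable
  have hDz : eLpNorm (fun p : X × G => ι ((U (S p)).1) - ι (T ((U p).1))) 2 (μ.prod mG) = 0 := by
    have key : ∀ ε : ℝ, 0 < ε →
        eLpNorm (fun p : X × G => ι ((U (S p)).1) - ι (T ((U p).1))) 2 (μ.prod mG)
          ≤ 2 * ENNReal.ofReal ε := by
      intro ε hε
      obtain ⟨h, hmem, hlt⟩ := hds ι hι2 ε hε
      obtain ⟨hh2, hhAB⟩ := main h hmem
      have asm1 : AEStronglyMeasurable (fun p : X × G => (ι - h) ((U (S p)).1)) (μ.prod mG) :=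
        (hι2.sub hh2).aestronglyMeasurable.comp_quasiMeasurePreserving hAX.quasiMeasurePreserving
      have asm2 : AEStronglyMeasurable (fun p : X × G => h ((U (S p)).1)) (μ.prod mG) :=
        hh2.aestronglyMeasurable.comp_quasiMeasurePreserving hAX.quasiMeasurePreserving
      have asm3 : AEStronglyMeasurable (fun p : X × G => h (T ((U p).1))) (μ.prod mG) :=
        hh2.aestronglyMeasurable.comp_quasiMeasurePreserving hBX.quasiMeasurePreserving
      have asm4 : AEStronglyMeasurable (fun p : X × G => (h - ι) (T ((U p).1))) (μ.prod mG) :=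
        (hh2.sub hι2).aestronglyMeasurable.comp_quasiMeasurePreserving hBX.quasiMeasurePreserving
      have deco : (fun p : X × G => ι ((U (S p)).1) - ι (T ((U p).1)))
          = (fun p : X × G => (ι - h) ((U (S p)).1) + (h ((U (S p)).1) - h (T ((U p).1))))
            + (fun p : X × G => (h - ι) (T ((U p).1))) := by
        funext p
        simp only [Pi.add_apply, Pi.sub_apply]
        ring
      have bound1 : eLpNorm (fun p : X × G => (ι - h) ((U (S p)).1)) 2 (μ.prod mG)
          = eLpNorm (ι - h) 2 μ :=
        eLpNorm_comp_measurePreserving (hι2.sub hh2).aestronglyMeasurable hAX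
      have bound2 : eLpNorm (fun p : X × G => (h - ι) (T ((U p).1))) 2 (μ.prod mG)
          = eLpNorm (ι - h) 2 μ := by
        have b2a : eLpNorm (fun p : X × G => (h - ι) (T ((U p).1))) 2 (μ.prod mG)
            = eLpNorm (h - ι) 2 μ :=
          eLpNorm_comp_measurePreserving (hh2.sub hι2).aestronglyMeasurable hBX
        rw [b2a, show h - ι = -(ι - h) from (neg_sub ι h).symm, eLpNorm_neg]
      have mid : (fun p : X × G => (ι - h) ((U (S p)).1) + (h ((U (S p)).1) - h (T ((U p).1))))
          =ᵐ[μ.prod mG] (fun p : X × G => (ι - h) ((U (S p)).1)) := by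
        filter_upwards [hhAB] with p hp
        rw [hp]
        ring
      calc eLpNorm (fun p : X × G => ι ((U (S p)).1) - ι (T ((U p).1))) 2 (μ.prod mG)
          ≤ eLpNorm (fun p : X × G => (ι - h) ((U (S p)).1)
              + (h ((U (S p)).1) - h (T ((U p).1)))) 2 (μ.prod mG)
            + eLpNorm (fun p : X × G => (h - ι) (T ((U p).1))) 2 (μ.prod mG) := by
            rw [deco]
            exact eLpNorm_add_le (asm1.add (asm2.sub asm3)) asm4 one_le_two
        _ = eLpNorm (fun p : X × G => (ι - h) ((U (S p)).1)) 2 (μ.prod mG)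
            + eLpNorm (fun p : X × G => (h - ι) (T ((U p).1))) 2 (μ.prod mG) := by
            rw [eLpNorm_congr_ae mid]
        _ = eLpNorm (ι - h) 2 μ + eLpNorm (ι - h) 2 μ := by rw [bound1, bound2]
        _ ≤ ENNReal.ofReal ε + ENNReal.ofReal ε := add_le_add hlt.le hlt.le
        _ = 2 * ENNReal.ofReal ε := (two_mul _).symm
    by_contra hne
    set D := eLpNorm (fun p : X × G => ι ((U (S p)).1) - ι (T ((U p).1))) 2 (μ.prod mG) with hD
    have hDpos : 0 < D := pos_iff_ne_zero.mpr hne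
    have hDfin : D ≠ ⊤ :=
      ne_top_of_le_ne_top (ENNReal.mul_ne_top (by norm_num) ENNReal.ofReal_ne_top)
        (key 1 one_pos)
    have hεp : 0 < D.toReal / 8 := by
      have : 0 < D.toReal := ENNReal.toReal_pos hne hDfin
      linarith
    have hk2 := key (D.toReal / 8) hεp
    have hDt : 0 < D.toReal := ENNReal.toReal_pos hne hDfin
    have hlt2 : 2 * ENNReal.ofReal (D.toReal / 8) < D := by
      rw [show (2 : ENNReal) * ENNReal.ofReal (D.toReal / 8)
          = ENNReal.ofReal (D.toReal / 4) by
        rw [show (2 : ENNReal) = ENNReal.ofReal 2 by simp,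
          ← ENNReal.ofReal_mul (by norm_num)]
        congr 1
        ring]
      conv_rhs => rw [← ENNReal.ofReal_toReal hDfin]
      exact (ENNReal.ofReal_lt_ofReal_iff hDt).mpr (by linarith)
    exact absurd hk2 (not_le.mpr hlt2)
  have hae : (fun p : X × G => ι ((U (S p)).1) - ι (T ((U p).1))) =ᵐ[μ.prod mG] 0 :=
    (eLpNorm_eq_zero_iff (hasmA.sub hasmB) (by norm_num : (2:ENNReal) ≠ 0)).mp hDz
  filter_upwards [hae] with p hp
  exact hιinj (sub_eq_zero.mp hp)



private lemma step_two
    (μ : Measure X) [IsProbabilityMeasure μ]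
    {T : X → X} (hT : Ergodic T μ) (hds : HasDiscreteSpectrum T μ)
    {ψ : X → G} (hψ : Measurable ψ) (mG : Measure G) [IsProbabilityMeasure mG]
    {S : X × G → X × G} (hS : ∀ p, S p = (T p.1, ψ p.1 * p.2))
    (hSmp : MeasurePreserving S (μ.prod mG) (μ.prod mG))
    {r : ℕ} (hTψr : Ergodic (S^[r]) (μ.prod mG))
    (hcop : Nat.Coprime r (Fintype.card G))
    {U : X × G → X × G} (hU : MeasurePreserving U (μ.prod mG) (μ.prod mG))
    (hUr : U ∘ (S^[r]) =ᵐ[μ.prod mG] (S^[r]) ∘ U) :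
    U ∘ S =ᵐ[μ.prod mG] S ∘ U := by
  haveI : MeasurableSpace.CountablySeparated G := by
    rw [MeasurableSpace.countablySeparated_def]
    refine ⟨Set.range (fun g : G => ({g} : Set G)), Set.countable_range _, ?_, ?_⟩
    · rintro s ⟨g, rfl⟩; exact MeasurableSet.singleton g
    · intro x _ y _ hxy
      have := hxy {x} ⟨x, rfl⟩
      simpa using (this.mp rfl).symm
  have key : (fun p => (U (S p)).1) =ᵐ[μ.prod mG] fun p => T ((U p).1) :=
    step_one μ hT hds mG hS hSmp hTψr hU hUr
  -- the fiber discrepancy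
  set δ : X × G → G := fun p => ((S (U p)).2)⁻¹ * (U (S p)).2 with hδdef
  have hδm : Measurable δ := by
    have m1 : Measurable (fun p : X × G => ((S (U p)).2, (U (S p)).2)) :=
      ((measurable_snd.comp (hSmp.measurable.comp hU.measurable)).prodMk
        (measurable_snd.comp (hU.measurable.comp hSmp.measurable)))
    exact (measurable_of_countable (fun q : G × G => q.1⁻¹ * q.2)).comp m1
  have hδinv : δ ∘ (S^[r]) =ᵐ[μ.prod mG] δ := by
    have hUrS : (fun p => U ((S^[r]) (S p))) =ᵐ[μ.prod mG]
        fun p => (S^[r]) (U (S p)) :=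
      hSmp.quasiMeasurePreserving.ae_eq_comp hUr
    filter_upwards [hUr, hUrS, key] with p hp1 hp2 hp3
    show δ ((S^[r]) p) = δ p
    have e1 : U ((S^[r]) p) = (S^[r]) (U p) := hp1
    have e2 : S ((S^[r]) p) = (S^[r]) (S p) := by
      rw [← Function.iterate_succ_apply' S r p, Function.iterate_succ_apply]
    rw [hδdef]
    simp only []
    rw [e1, e2, hp2]
    -- expand everything
    rw [hS ((S^[r]) (U p))]
    simp only []
    rw [skew_fst_iterate hS, skew_snd_iterate hS r (U p),
      skew_snd_iterate hS r (U (S p)), hp3,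
      hS (U p)]
    simp only []
    have e3 : ψ (T^[r] (U p).1) * ((S^[r]) ((U p).1, 1)).2
        = ((S^[r]) (T (U p).1, 1)).2 * ψ (U p).1 := by
      rw [← skew_psi_succ' hS r, skew_psi_succ hS r]
    have e4 : (ψ (T^[r] (U p).1) * (((S^[r]) ((U p).1, 1)).2 * (U p).2))⁻¹
        = ((ψ (T^[r] (U p).1) * ((S^[r]) ((U p).1, 1)).2) * (U p).2)⁻¹ := by
      rw [mul_assoc]
    rw [e4, e3]
    group
  obtain ⟨h, hh⟩ := hTψr.ae_eq_const_of_ae_eq_comp₀ hδm.nullMeasurable hδinv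
  -- one-step commutation up to right translation by h
  have claim1 : U ∘ S =ᵐ[μ.prod mG]
      fun p => ((S (U p)).1, (S (U p)).2 * h) := by
    filter_upwards [key, hh] with p hp1 hp2
    have h2 : (U (S p)).2 = (S (U p)).2 * h := by
      have : ((S (U p)).2)⁻¹ * (U (S p)).2 = h := hp2
      rw [← this, ← mul_assoc, mul_inv_cancel, one_mul]
    have h1 : (U (S p)).1 = (S (U p)).1 := by
      rw [hS (U p)]
      exact hp1
    show U (S p) = _
    exact Prod.ext h1 h2
  -- iterate it
  have claimk : ∀ k : ℕ, U ∘ (S^[k]) =ᵐ[μ.prod mG]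
      fun p => (((S^[k]) (U p)).1, ((S^[k]) (U p)).2 * h ^ k) := by
    intro k
    induction k with
    | zero =>
      simp only [Function.iterate_zero, Function.comp_id, pow_zero, mul_one]
      exact Filter.Eventually.of_forall fun p => rfl
    | succ n ih =>
      have e0 : U ∘ (S^[n+1]) = (U ∘ (S^[n])) ∘ S := by
        funext p
        simp [Function.iterate_succ_apply]
      have e1 : (U ∘ (S^[n])) ∘ S =ᵐ[μ.prod mG]
          (fun p => (((S^[n]) (U p)).1, ((S^[n]) (U p)).2 * h ^ n)) ∘ S :=
        hSmp.quasiMeasurePreserving.ae_eq_comp ih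
      have e2 : (fun p => (((S^[n]) (U p)).1, ((S^[n]) (U p)).2 * h ^ n)) ∘ S
          =ᵐ[μ.prod mG]
          fun p => (((S^[n+1]) (U p)).1, ((S^[n+1]) (U p)).2 * h ^ (n+1)) := by
        filter_upwards [claim1] with p hp
        have hp' : U (S p) = ((S (U p)).1, (S (U p)).2 * h) := hp
        show (((S^[n]) (U (S p))).1, ((S^[n]) (U (S p))).2 * h ^ n) = _
        rw [hp']
        have f1 : ((S^[n]) ((S (U p)).1, (S (U p)).2 * h)).1
            = ((S^[n+1]) (U p)).1 := by
          rw [skew_fst_iterate hS, Function.iterate_succ_apply,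
            skew_fst_iterate hS]
        have f2 : ((S^[n]) ((S (U p)).1, (S (U p)).2 * h)).2
            = ((S^[n+1]) (U p)).2 * h := by
          rw [skew_snd_iterate hS n ((S (U p)).1, (S (U p)).2 * h),
            Function.iterate_succ_apply, skew_snd_iterate hS n (S (U p))]
          simp [mul_assoc]
        rw [f1, f2]
        rw [mul_assoc, ← pow_succ']
      rw [e0]
      exact e1.trans e2
  -- h ^ r = 1
  haveI : (MeasureTheory.ae (μ.prod mG)).NeBot :=
    MeasureTheory.ae_neBot.mpr (IsProbabilityMeasure.ne_zero _)
  have hpow : h ^ r = 1 := by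
    have comb : (S^[r]) ∘ U =ᵐ[μ.prod mG]
        fun p => (((S^[r]) (U p)).1, ((S^[r]) (U p)).2 * h ^ r) :=
      hUr.symm.trans (claimk r)
    obtain ⟨p, hp⟩ := comb.exists
    have := congrArg Prod.snd hp
    simp only [] at this
    exact (left_eq_mul.mp this)
  have hone : h = 1 := by
    have d1 : orderOf h ∣ r := orderOf_dvd_of_pow_eq_one hpow
    have d2 : orderOf h ∣ Fintype.card G := orderOf_dvd_card
    have : orderOf h ∣ Nat.gcd r (Fintype.card G) := Nat.dvd_gcd d1 d2
    rw [Nat.Coprime.gcd_eq_one hcop] at this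
    exact orderOf_eq_one_iff.mp (Nat.dvd_one.mp this)
  filter_upwards [claim1] with p hp
  have hp' : U (S p) = ((S (U p)).1, (S (U p)).2 * h) := hp
  show U (S p) = S (U p)
  rw [hp', hone, mul_one]

end StepOne

private lemma centralizer_subset_iterate {α : Type*} [MeasurableSpace α] (S : α → α)
    (m : Measure α) (hS : MeasurePreserving S m m) (r : ℕ) :
    Centralizer S m ⊆ Centralizer (S^[r]) m := by
  rintro U ⟨hU, hQI, hcomm⟩
  refine ⟨hU, hQI, ?_⟩
  induction r with
  | zero => simp [Function.iterate_zero]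
  | succ n ih =>
    calc U ∘ S^[n+1] = (U ∘ S^[n]) ∘ S := by rw [Function.iterate_succ]; rfl
      _ =ᵐ[m] (S^[n] ∘ U) ∘ S := hS.quasiMeasurePreserving.ae_eq_comp ih
      _ = S^[n] ∘ (U ∘ S) := rfl
      _ =ᵐ[m] S^[n] ∘ (S ∘ U) := hcomm.fun_comp (S^[n])
      _ = S^[n+1] ∘ U := by
          funext x
          show S^[n] (S (U x)) = S^[n+1] (U x)
          rw [Function.iterate_succ_apply]

/-- **Centralizers of powers of ergodic finite group extensions.**
Let `T` be an ergodic invertible measure-preserving transformation of a standard Borel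
probability space with discrete spectrum, `G` a finite group with `|G| = m`, `ψ : X → G`
measurable with `T_ψ` ergodic (for `μ ⊗ m_G`, `m_G` the uniform measure).  If `r ≥ 2`,
`(T_ψ)^r` is ergodic and `gcd(r, m) = 1`, then `C(T_ψ) = C((T_ψ)^r)`. -/
theorem stmt_8 {X : Type*} [MeasurableSpace X] [StandardBorelSpace X]
    {G : Type*} [Group G] [Fintype G] [MeasurableSpace G] [MeasurableSingletonClass G]
    (μ : Measure X) [IsProbabilityMeasure μ]
    (T : X ≃ᵐ X) (hT : Ergodic (⇑T) μ) (hds : HasDiscreteSpectrum (⇑T) μ)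
    (ψ : X → G) (hψ : Measurable ψ)
    (mG : Measure G) (hmG : mG = (Fintype.card G : ENNReal)⁻¹ • Measure.count)
    (hTψ : Ergodic (fun p : X × G => (T p.1, ψ p.1 * p.2)) (μ.prod mG))
    (r : ℕ) (hr : 2 ≤ r)
    (hTψr : Ergodic ((fun p : X × G => (T p.1, ψ p.1 * p.2))^[r]) (μ.prod mG))
    (hcop : Nat.Coprime r (Fintype.card G)) :
    Centralizer (fun p : X × G => (T p.1, ψ p.1 * p.2)) (μ.prod mG) =
      Centralizer ((fun p : X × G => (T p.1, ψ p.1 * p.2))^[r]) (μ.prod mG) := by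
  apply Set.Subset.antisymm
  · exact centralizer_subset_iterate _ _ hTψ.toMeasurePreserving r
  · rintro U ⟨hUmp, hQI, hcomm⟩
    haveI : IsProbabilityMeasure mG := by
      constructor
      rw [hmG]
      simp only [Measure.smul_apply, smul_eq_mul, Measure.count_univ, ENat.card_eq_coe_fintype_card, ENat.toENNReal_coe]
      exact ENNReal.inv_mul_cancel (by exact_mod_cast Fintype.card_ne_zero) (by simp)
    exact ⟨hUmp, hQI,
      step_two μ hT hds hψ mG (fun p => rfl) hTψ.toMeasurePreserving hTψr hcop hUmp hcomm⟩
end
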